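/- arXiv:1706.03062 — 7 statements merged into one kernel-verified Lean document; each statement's English description precedes it below -/
import Mathlib

section
/- Let U ⊆ ℝ² be an open set, K ⊆ U a compact set, and C > 0. Then the set M of pairs (i,j) ∈ ℤ² such that there exists d ∈ ℝ with the affine function ix + jy + d nonnegative on U and with value at most C at some point of K, is finite (assuming U ≠ ℝ², so that the distance R from K to ℝ²\U is positive; the bound is i² + j² ≤ C²/R²). -/
/-! A nonnegative affine function `ℓ + d` on a ball of radius `δ` around `p` satisfies
`δ ‖ℓ‖ ≤ ℓ p + d`: moving from `p` against the gradient decreases it at rate `‖ℓ‖`.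
Every point of `K` is the centre of such a ball inside `U`, for one fixed `δ > 0`, so the
integer slopes in question have norm at most `C / δ`, and bounded subsets of `ℤ²` are finite. -/

open Metric

namespace ContinuousLinearMap

variable {E : Type*} [NormedAddCommGroup E] [NormedSpace ℝ E]

theorem opNorm_le_div_of_ball {F : Type*} [SeminormedAddCommGroup F] [NormedSpace ℝ F]
    (f : E →L[ℝ] F) {δ C : ℝ} (hδ : 0 < δ) (hf : ∀ x ∈ ball (0 : E) δ, ‖f x‖ ≤ C) :
    ‖f‖ ≤ C / δ := by
  by_contra! hlt
  obtain ⟨x, hx, hCx⟩ := f.exists_lt_apply_of_lt_opNorm hlt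
  have hδx : δ • x ∈ ball (0 : E) δ := by
    rw [mem_ball_zero_iff, norm_smul, Real.norm_of_nonneg hδ.le]
    exact mul_lt_of_lt_one_right hδ hx
  have hCδx := hf _ hδx
  rw [map_smul, norm_smul, Real.norm_of_nonneg hδ.le] at hCδx
  rw [div_lt_iff₀ hδ] at hCx
  linarith

theorem norm_le_of_add_const_nonneg_on_ball (ℓ : E →L[ℝ] ℝ) {p : E} {d δ C : ℝ} (hδ : 0 < δ)
    (hnonneg : ∀ q ∈ ball p δ, 0 ≤ ℓ q + d) (hC : ℓ p + d ≤ C) : ‖ℓ‖ ≤ C / δ := by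
  refine ℓ.opNorm_le_div_of_ball hδ fun x hx => ?_
  have hx' : ‖x‖ < δ := mem_ball_zero_iff.mp hx
  have hplus := hnonneg (p + x) (by rwa [mem_ball_iff_norm, add_sub_cancel_left])
  have hminus := hnonneg (p - x) (by rwa [mem_ball_iff_norm, sub_sub_cancel_left, norm_neg])
  rw [map_add] at hplus
  rw [map_sub] at hminus
  exact abs_le.mpr ⟨by linarith, by linarith⟩

theorem norm_le_norm_smul_fst_add_smul_snd (a b : ℝ) :
    ‖(a, b)‖ ≤ ‖a • fst ℝ ℝ ℝ + b • snd ℝ ℝ ℝ‖ := by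
  refine max_le ?_ ?_
  · simpa using (a • fst ℝ ℝ ℝ + b • snd ℝ ℝ ℝ).le_opNorm (1, 0)
  · simpa using (a • fst ℝ ℝ ℝ + b • snd ℝ ℝ ℝ).le_opNorm (0, 1)

end ContinuousLinearMap

open ContinuousLinearMap in
theorem stmt_0_general (U : Set (ℝ × ℝ)) (hU : IsOpen U) (K : Set (ℝ × ℝ))
    (hK : IsCompact K) (hKU : K ⊆ U) (C : ℝ) :
    {ij : ℤ × ℤ | ∃ d : ℝ,
      (∀ p ∈ U, 0 ≤ (ij.1 : ℝ) * p.1 + (ij.2 : ℝ) * p.2 + d) ∧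
      (∃ p ∈ K, (ij.1 : ℝ) * p.1 + (ij.2 : ℝ) * p.2 + d ≤ C)}.Finite := by
  obtain ⟨δ, hδ, hthick⟩ := hK.exists_thickening_subset_open hU hKU
  refine (isCompact_closedBall (0 : ℤ × ℤ) (C / δ)).finite_of_discrete.subset ?_
  rintro ⟨i, j⟩ ⟨d, hnonneg, p, hpK, hpC⟩
  set ℓ := (i : ℝ) • fst ℝ ℝ ℝ + (j : ℝ) • snd ℝ ℝ ℝ
  rw [mem_closedBall_zero_iff]
  calc ‖(i, j)‖ = ‖((i : ℝ), (j : ℝ))‖ := by simp [Prod.norm_def, Int.norm_eq_abs]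
    _ ≤ ‖ℓ‖ := norm_le_norm_smul_fst_add_smul_snd _ _
    _ ≤ C / δ := ℓ.norm_le_of_add_const_nonneg_on_ball hδ
        (fun q hq => by simpa [ℓ] using hnonneg q (hthick (ball_subset_thickening hpK δ hq)))
        (by simpa [ℓ] using hpC)

/-- The set of integer slopes `(i,j)` admitting a constant `d` such that the affine
function `ix+jy+d` is nonnegative on the open set `U` and takes a value `≤ C`
somewhere on the compact set `K ⊆ U` is finite (assuming `U ≠ ℝ²`). -/
theorem stmt_0 (U : Set (ℝ × ℝ)) (hU : IsOpen U) (K : Set (ℝ × ℝ))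
    (hK : IsCompact K) (hKU : K ⊆ U) (hUne : U ≠ Set.univ) (C : ℝ) (hC : 0 < C) :
    {ij : ℤ × ℤ | ∃ d : ℝ,
      (∀ p ∈ U, 0 ≤ (ij.1 : ℝ) * p.1 + (ij.2 : ℝ) * p.2 + d) ∧
      (∃ p ∈ K, (ij.1 : ℝ) * p.1 + (ij.2 : ℝ) * p.2 + d ≤ C)}.Finite :=
  stmt_0_general U hU K hK hKU C
end

section
/- If (i,j) ∈ ℤ², d ∈ ℝ, the affine function f(x,y) = ix + jy + d is nonnegative on an open set U ⊆ ℝ², and K ⊆ U is compact with distance R > 0 to the complement of U, then f(x,y) ≥ R·√(i² + j²) for all (x,y) ∈ K. -/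
open Metric RealInnerProductSpace

section AffineLowerBound

variable {E : Type*} [NormedAddCommGroup E] [InnerProductSpace ℝ E]

theorem nonneg_on_closedBall_of_nonneg_on_ball {g : E → ℝ} (hg : Continuous g) {p : E} {R : ℝ}
    (hR : 0 < R) (hball : ∀ q ∈ ball p R, 0 ≤ g q) : ∀ q ∈ closedBall p R, 0 ≤ g q := by
  rw [← closure_ball p hR.ne']
  exact closure_minimal hball (isClosed_le continuous_const hg)

/-- The minimum of `⟪w, ·⟫ + c` on `closedBall p R` is attained at `p - (R / ‖w‖) • w`. -/
theorem mul_norm_le_inner_add_of_nonneg_on_ball {w p : E} {c R : ℝ} (hR : 0 < R)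
    (hball : ∀ q ∈ ball p R, 0 ≤ ⟪w, q⟫ + c) : R * ‖w‖ ≤ ⟪w, p⟫ + c := by
  have hclosed := nonneg_on_closedBall_of_nonneg_on_ball (by fun_prop) hR hball
  by_cases hw : w = 0
  · simpa [hw] using hclosed p (mem_closedBall_self hR.le)
  have hnorm : ‖w‖ ≠ 0 := norm_ne_zero_iff.mpr hw
  set q := p - (R / ‖w‖) • w
  have hq : q ∈ closedBall p R := by
    rw [mem_closedBall, dist_eq_norm, sub_sub_cancel_left, norm_neg, norm_smul,
      Real.norm_of_nonneg (by positivity), div_mul_cancel₀ _ hnorm]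
  have hinner : ⟪w, q⟫ = ⟪w, p⟫ - R * ‖w‖ := by
    rw [inner_sub_right, inner_smul_right, real_inner_self_eq_norm_sq]
    field_simp
  linarith [hclosed q hq]

end AffineLowerBound

theorem stmt_1_general (U : Set (EuclideanSpace ℝ (Fin 2)))
    (K : Set (EuclideanSpace ℝ (Fin 2)))
    (i j : ℤ) (d : ℝ)
    (hpos : ∀ p ∈ U, 0 ≤ (i : ℝ) * p 0 + (j : ℝ) * p 1 + d)
    (R : ℝ) (hR : 0 < R) (hdist : ∀ p ∈ K, ∀ q, q ∉ U → R ≤ dist p q) :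
    ∀ p ∈ K, R * Real.sqrt ((i : ℝ) ^ 2 + (j : ℝ) ^ 2) ≤ (i : ℝ) * p 0 + (j : ℝ) * p 1 + d := by
  intro p hp
  set w : EuclideanSpace ℝ (Fin 2) := !₂[(i : ℝ), (j : ℝ)]
  have hinner : ∀ q : EuclideanSpace ℝ (Fin 2), ⟪w, q⟫ = (i : ℝ) * q 0 + (j : ℝ) * q 1 := by
    intro q
    simp [w, PiLp.inner_apply, Fin.sum_univ_two, mul_comm]
  have hnorm : ‖w‖ = Real.sqrt ((i : ℝ) ^ 2 + (j : ℝ) ^ 2) := by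
    simp [w, EuclideanSpace.norm_eq, Fin.sum_univ_two]
  have hball : ball p R ⊆ U := fun q hq => by
    by_contra hqU
    exact (mem_ball'.mp hq).not_ge (hdist p hp q hqU)
  rw [← hnorm, ← hinner]
  exact mul_norm_le_inner_add_of_nonneg_on_ball hR fun q hq => hinner q ▸ hpos q (hball hq)

/-- If the affine function `f(x,y) = ix+jy+d` is nonnegative on an open set `U ⊆ ℝ²`
and `K ⊆ U` is compact at distance at least `R > 0` from the complement of `U`,
then `f ≥ R·√(i²+j²)` on `K`. -/
theorem stmt_1 (U : Set (EuclideanSpace ℝ (Fin 2))) (hU : IsOpen U)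
    (K : Set (EuclideanSpace ℝ (Fin 2))) (hK : IsCompact K) (hKU : K ⊆ U)
    (i j : ℤ) (d : ℝ)
    (hpos : ∀ p ∈ U, 0 ≤ (i : ℝ) * p 0 + (j : ℝ) * p 1 + d)
    (R : ℝ) (hR : 0 < R) (hdist : ∀ p ∈ K, ∀ q, q ∉ U → R ≤ dist p q) :
    ∀ p ∈ K, R * Real.sqrt ((i : ℝ) ^ 2 + (j : ℝ) ^ 2) ≤ (i : ℝ) * p 0 + (j : ℝ) * p 1 + d :=
  stmt_1_general U K i j d hpos R hR hdist
end

section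
/- Let Ω ⊆ ℝ² be a convex closed set which is admissible (i.e. Ω has nonempty interior, Ω ≠ ℝ², and Ω is not a half-plane or strip bounded by lines of irrational slope). Then the set A_Ω = {(i,j) ∈ ℤ² : inf_{(x,y)∈Ω} (ix + jy) > -∞} contains some (i,j) ≠ (0,0). -/
/-!
The linear forms bounded below on `Ω` form a convex cone, which is nonzero by
Hahn–Banach since `Ω ≠ ℝ²`. If the cone contains two independent forms, it contains an
open cone, hence a rational form, hence an integral one. Otherwise every separating
form is a multiple of one form `v`, so each point outside `Ω` is cut off by a level line
of `v`: `Ω` is a strip or a half-plane with normal `v`, and admissibility forces `v` to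
have rational slope.
-/

/-- `(a,b)` is proportional to a nonzero integer vector (so a line with normal `(a,b)`
has rational slope, possibly infinite). -/
def normalIsRational (a b : ℝ) : Prop :=
  ∃ m n : ℤ, (m, n) ≠ ((0 : ℤ), (0 : ℤ)) ∧ a * (n : ℝ) = b * (m : ℝ)

open Set

def linForm (w p : ℝ × ℝ) : ℝ := w.1 * p.1 + w.2 * p.2

def barrierCone (Ω : Set (ℝ × ℝ)) : Set (ℝ × ℝ) := {w | BddBelow (linForm w '' Ω)}

lemma linForm_add (v w p : ℝ × ℝ) : linForm (v + w) p = linForm v p + linForm w p := by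
  simp only [linForm, Prod.fst_add, Prod.snd_add]; ring

lemma linForm_smul (t : ℝ) (v p : ℝ × ℝ) : linForm (t • v) p = t * linForm v p := by
  simp only [linForm, Prod.smul_fst, Prod.smul_snd, smul_eq_mul]; ring

section barrierCone

variable {Ω : Set (ℝ × ℝ)} {v w : ℝ × ℝ}

lemma add_mem_barrierCone (hv : v ∈ barrierCone Ω) (hw : w ∈ barrierCone Ω) :
    v + w ∈ barrierCone Ω := by
  obtain ⟨cv, hcv⟩ := hv
  obtain ⟨cw, hcw⟩ := hw
  refine ⟨cv + cw, forall_mem_image.2 fun x hx => ?_⟩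
  rw [linForm_add]
  exact add_le_add (hcv (mem_image_of_mem _ hx)) (hcw (mem_image_of_mem _ hx))

lemma smul_mem_barrierCone {t : ℝ} (ht : 0 ≤ t) (hv : v ∈ barrierCone Ω) :
    t • v ∈ barrierCone Ω := by
  obtain ⟨c, hc⟩ := hv
  refine ⟨t * c, forall_mem_image.2 fun x hx => ?_⟩
  rw [linForm_smul]
  exact mul_le_mul_of_nonneg_left (hc (mem_image_of_mem _ hx)) ht

lemma exists_eq_smul_of_det_eq_zero (hv : v ≠ 0) (h : v.1 * w.2 - v.2 * w.1 = 0) :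
    ∃ t : ℝ, w = t • v := by
  rcases ne_or_eq v.1 0 with h1 | h1
  · refine ⟨w.1 / v.1, Prod.ext ?_ ?_⟩ <;>
      simp only [Prod.smul_fst, Prod.smul_snd, smul_eq_mul] <;> field_simp
    linarith
  · have h2 : v.2 ≠ 0 := fun h2 => hv (Prod.ext h1 h2)
    refine ⟨w.2 / v.2, Prod.ext ?_ ?_⟩ <;>
      simp only [Prod.smul_fst, Prod.smul_snd, smul_eq_mul, h1] at h ⊢ <;> field_simp
    simpa [h2] using h

lemma exists_int_mem_barrierCone_of_rat {q : ℚ × ℚ} (hq0 : q ≠ 0)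
    (hq : ((q.1 : ℝ), (q.2 : ℝ)) ∈ barrierCone Ω) :
    ∃ ij : ℤ × ℤ, ij ≠ 0 ∧ ((ij.1 : ℝ), (ij.2 : ℝ)) ∈ barrierCone Ω := by
  refine ⟨(q.1.num * q.2.den, q.2.num * q.1.den), ?_, ?_⟩
  · contrapose! hq0
    simpa [Prod.ext_iff] using hq0
  · have hscale : (((q.1.num * q.2.den : ℤ) : ℝ), ((q.2.num * q.1.den : ℤ) : ℝ)) =
        ((q.1.den * q.2.den : ℕ) : ℝ) • ((q.1 : ℝ), (q.2 : ℝ)) := by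
      have h1 : (q.1 : ℝ) * q.1.den = q.1.num := by exact_mod_cast q.1.mul_den_eq_num
      have h2 : (q.2 : ℝ) * q.2.den = q.2.num := by exact_mod_cast q.2.mul_den_eq_num
      ext <;> simp only [Prod.smul_fst, Prod.smul_snd, smul_eq_mul] <;> push_cast
      · linear_combination (q.2.den : ℝ) * h1.symm
      · linear_combination (q.1.den : ℝ) * h2.symm
    rw [hscale]
    exact smul_mem_barrierCone (Nat.cast_nonneg _) hq

lemma exists_rat_mem_barrierCone (hv : v ∈ barrierCone Ω) (hw : w ∈ barrierCone Ω)
    (hdet : v.1 * w.2 - v.2 * w.1 ≠ 0) :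
    ∃ q : ℚ × ℚ, q ≠ 0 ∧ ((q.1 : ℝ), (q.2 : ℝ)) ∈ barrierCone Ω := by
  set D := v.1 * w.2 - v.2 * w.1
  -- the coordinates of `t` in the basis `v, w` (Cramer's rule)
  let a : ℝ × ℝ → ℝ := fun t => (t.1 * w.2 - t.2 * w.1) / D
  let b : ℝ × ℝ → ℝ := fun t => (v.1 * t.2 - v.2 * t.1) / D
  have hab : ∀ t, a t • v + b t • w = t := fun t => by
    ext <;> simp only [a, b, Prod.fst_add, Prod.snd_add, Prod.smul_fst, Prod.smul_snd,
      smul_eq_mul] <;> field_simp <;> ring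
  have hU : IsOpen ({t | 0 < a t} ∩ {t | 0 < b t}) :=
    (isOpen_lt continuous_const (by fun_prop)).inter (isOpen_lt continuous_const (by fun_prop))
  have hvw : 0 < a (v + w) ∧ 0 < b (v + w) := by
    have ha : a (v + w) = 1 := by
      simp only [a, Prod.fst_add, Prod.snd_add]; rw [div_eq_one_iff_eq hdet]; ring
    have hb : b (v + w) = 1 := by
      simp only [b, Prod.fst_add, Prod.snd_add]; rw [div_eq_one_iff_eq hdet]; ring
    simp [ha, hb]
  obtain ⟨q, hqa, hqb⟩ :=
    (Rat.denseRange_cast.prodMap Rat.denseRange_cast).exists_mem_open hU ⟨_, hvw⟩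
  refine ⟨q, ?_, ?_⟩
  · rintro rfl
    simp [a] at hqa
  · rw [← hab ((q.1 : ℝ), (q.2 : ℝ))]
    exact add_mem_barrierCone (smul_mem_barrierCone hqa.le hv) (smul_mem_barrierCone hqb.le hw)

lemma exists_int_mem_barrierCone_of_normalIsRational (hv0 : v ≠ 0)
    (hrat : normalIsRational v.1 v.2) (hv : v ∈ barrierCone Ω) :
    ∃ ij : ℤ × ℤ, ij ≠ 0 ∧ ((ij.1 : ℝ), (ij.2 : ℝ)) ∈ barrierCone Ω := by
  obtain ⟨m, n, hmn0, hmn⟩ := hrat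
  obtain ⟨t, ht⟩ := exists_eq_smul_of_det_eq_zero (w := ((m : ℝ), (n : ℝ))) hv0 (by
    simp only; linarith)
  have ht0 : t ≠ 0 := by
    rintro rfl
    simp only [zero_smul, Prod.ext_iff, Prod.fst_zero, Prod.snd_zero, Int.cast_eq_zero] at ht
    exact hmn0 (Prod.ext ht.1 ht.2)
  rcases ht0.lt_or_gt with hneg | hpos
  · refine ⟨(-m, -n), by simpa [Prod.ext_iff] using hmn0, ?_⟩
    have hneg_smul : ((((-m : ℤ)) : ℝ), (((-n : ℤ)) : ℝ)) = (-t) • v := by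
      rw [neg_smul, ← ht]; push_cast; rfl
    rw [hneg_smul]
    exact smul_mem_barrierCone (by linarith) hv
  · exact ⟨(m, n), hmn0, ht ▸ smul_mem_barrierCone hpos.le hv⟩

lemma exists_linForm_lt_of_notMem (hconv : Convex ℝ Ω) (hcl : IsClosed Ω) (hΩ : Ω.Nonempty)
    {p : ℝ × ℝ} (hp : p ∉ Ω) :
    ∃ w ≠ 0, ∃ u, linForm w p < u ∧ ∀ x ∈ Ω, u < linForm w x := by
  obtain ⟨f, u, hfp, hfΩ⟩ := geometric_hahn_banach_point_closed hconv hcl hp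
  set w : ℝ × ℝ := (f (1, 0), f (0, 1))
  have hf : ∀ x, f x = linForm w x := fun x => by
    conv_lhs => rw [show x = x.1 • ((1 : ℝ), (0 : ℝ)) + x.2 • ((0 : ℝ), (1 : ℝ)) by simp]
    simp only [map_add, map_smul, smul_eq_mul, linForm, w, mul_comm]
  simp only [hf] at hfp hfΩ
  refine ⟨w, fun h0 => ?_, u, hfp, hfΩ⟩
  obtain ⟨x, hx⟩ := hΩ
  have hx := hfΩ x hx
  simp only [h0, linForm, Prod.fst_zero, Prod.snd_zero, zero_mul, add_zero] at hfp hx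
  linarith

end barrierCone

def LevelSetsSeparate {α : Type*} (Ω : Set α) (f : α → ℝ) : Prop :=
  ∀ p ∉ Ω, (∃ e, f p < e ∧ ∀ x ∈ Ω, e < f x) ∨ ∃ e, e < f p ∧ ∀ x ∈ Ω, f x < e

section LevelSetsSeparate

variable {α : Type*} {Ω : Set α} {f : α → ℝ}

lemma LevelSetsSeparate.eq_setOf_csInf_le_le_csSup (hsep : LevelSetsSeparate Ω f)
    (hΩ : Ω.Nonempty) (hbb : BddBelow (f '' Ω)) (hba : BddAbove (f '' Ω)) :
    Ω = {p | sInf (f '' Ω) ≤ f p ∧ f p ≤ sSup (f '' Ω)} := by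
  refine Subset.antisymm (fun x hx => ⟨csInf_le hbb (mem_image_of_mem f hx),
    le_csSup hba (mem_image_of_mem f hx)⟩) fun p ⟨hinf, hsup⟩ => ?_
  by_contra hp
  rcases hsep p hp with ⟨e, hpe, he⟩ | ⟨e, hep, he⟩
  · have := le_csInf (hΩ.image f) (forall_mem_image.2 fun x hx => (he x hx).le)
    linarith
  · have := csSup_le (hΩ.image f) (forall_mem_image.2 fun x hx => (he x hx).le)
    linarith

lemma LevelSetsSeparate.eq_setOf_csInf_le (hsep : LevelSetsSeparate Ω f)
    (hΩ : Ω.Nonempty) (hbb : BddBelow (f '' Ω)) (hba : ¬ BddAbove (f '' Ω)) :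
    Ω = {p | sInf (f '' Ω) ≤ f p} := by
  refine Subset.antisymm (fun x hx => csInf_le hbb (mem_image_of_mem f hx)) fun p (hinf : sInf (f '' Ω) ≤ f p) => ?_
  by_contra hp
  rcases hsep p hp with ⟨e, hpe, he⟩ | ⟨e, -, he⟩
  · have := le_csInf (hΩ.image f) (forall_mem_image.2 fun x hx => (he x hx).le)
    linarith
  · exact hba ⟨e, forall_mem_image.2 fun x hx => (he x hx).le⟩

end LevelSetsSeparate

lemma levelSetsSeparate_linForm {Ω : Set (ℝ × ℝ)} (hconv : Convex ℝ Ω) (hcl : IsClosed Ω)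
    (hΩ : Ω.Nonempty) {v : ℝ × ℝ} (hv : v ≠ 0)
    (hpar : ∀ w ∈ barrierCone Ω, v.1 * w.2 - v.2 * w.1 = 0) :
    LevelSetsSeparate Ω (linForm v) := by
  intro p hp
  obtain ⟨w, hw0, u, hwp, hwΩ⟩ := exists_linForm_lt_of_notMem hconv hcl hΩ hp
  obtain ⟨t, rfl⟩ := exists_eq_smul_of_det_eq_zero hv
    (hpar w ⟨u, forall_mem_image.2 fun x hx => (hwΩ x hx).le⟩)
  have ht : t ≠ 0 := by rintro rfl; simp at hw0
  simp only [linForm_smul] at hwp hwΩ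
  rcases ht.lt_or_gt with hneg | hpos
  · exact .inr ⟨u / t, (div_lt_iff_of_neg hneg).2 (by linarith),
      fun x hx => (lt_div_iff_of_neg hneg).2 (by linarith [hwΩ x hx])⟩
  · exact .inl ⟨u / t, (lt_div_iff₀ hpos).2 (by linarith),
      fun x hx => (div_lt_iff₀ hpos).2 (by linarith [hwΩ x hx])⟩

lemma normalIsRational_neg_iff {a b : ℝ} : normalIsRational (-a) (-b) ↔ normalIsRational a b := by
  simp only [normalIsRational, neg_mul, neg_inj]

theorem stmt_2_general (Ω : Set (ℝ × ℝ)) (hconv : Convex ℝ Ω) (hcl : IsClosed Ω)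
    (hne : Ω ≠ Set.univ)
    (hHP : ¬ ∃ a b c : ℝ, ¬ normalIsRational a b ∧
      Ω = {p : ℝ × ℝ | a * p.1 + b * p.2 ≤ c})
    (hStrip : ¬ ∃ a b c₁ c₂ : ℝ, ¬ normalIsRational a b ∧
      Ω = {p : ℝ × ℝ | c₁ ≤ a * p.1 + b * p.2 ∧ a * p.1 + b * p.2 ≤ c₂}) :
    ∃ ij : ℤ × ℤ, ij ≠ (0, 0) ∧
      BddBelow ((fun p : ℝ × ℝ => (ij.1 : ℝ) * p.1 + (ij.2 : ℝ) * p.2) '' Ω) := by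
  rcases Ω.eq_empty_or_nonempty with rfl | hΩ
  · exact ⟨(1, 0), by simp, by simp⟩
  obtain ⟨p, hp⟩ := (ne_univ_iff_exists_notMem Ω).mp hne
  obtain ⟨v, hv0, u, -, hvΩ⟩ := exists_linForm_lt_of_notMem hconv hcl hΩ hp
  have hv : v ∈ barrierCone Ω := ⟨u, forall_mem_image.2 fun x hx => (hvΩ x hx).le⟩
  by_cases hindep : ∃ w ∈ barrierCone Ω, v.1 * w.2 - v.2 * w.1 ≠ 0
  · obtain ⟨w, hw, hdet⟩ := hindep
    obtain ⟨q, hq0, hq⟩ := exists_rat_mem_barrierCone hv hw hdet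
    exact exists_int_mem_barrierCone_of_rat hq0 hq
  push Not at hindep
  have hsep := levelSetsSeparate_linForm hconv hcl hΩ hv0 hindep
  refine exists_int_mem_barrierCone_of_normalIsRational hv0 ?_ hv
  by_contra hirr
  by_cases hba : BddAbove (linForm v '' Ω)
  · exact hStrip ⟨v.1, v.2, _, _, hirr, hsep.eq_setOf_csInf_le_le_csSup hΩ hv hba⟩
  · refine hHP ⟨-v.1, -v.2, -sInf (linForm v '' Ω), normalIsRational_neg_iff.not.2 hirr, ?_⟩
    refine (hsep.eq_setOf_csInf_le hΩ hv hba).trans (Set.ext fun x => ?_)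
    simp only [linForm, mem_ofPred_eq, neg_mul, ← neg_add, neg_le_neg_iff]

/-- An admissible convex closed set `Ω ⊆ ℝ²` (nonempty interior, `Ω ≠ ℝ²`, not a
half-plane nor a strip with boundary of irrational slope) admits a nonzero integer
vector `(i,j)` such that `ix+jy` is bounded below on `Ω`. -/
theorem stmt_2 (Ω : Set (ℝ × ℝ)) (hconv : Convex ℝ Ω) (hcl : IsClosed Ω)
    (hint : (interior Ω).Nonempty) (hne : Ω ≠ Set.univ)
    (hHP : ¬ ∃ a b c : ℝ, ¬ normalIsRational a b ∧
      Ω = {p : ℝ × ℝ | a * p.1 + b * p.2 ≤ c})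
    (hStrip : ¬ ∃ a b c₁ c₂ : ℝ, ¬ normalIsRational a b ∧
      Ω = {p : ℝ × ℝ | c₁ ≤ a * p.1 + b * p.2 ∧ a * p.1 + b * p.2 ≤ c₂}) :
    ∃ ij : ℤ × ℤ, ij ≠ (0, 0) ∧
      BddBelow ((fun p : ℝ × ℝ => (ij.1 : ℝ) * p.1 + (ij.2 : ℝ) * p.2) '' Ω) :=
  stmt_2_general Ω hconv hcl hne hHP hStrip
end

section
/- Let Ω ⊆ ℝ² be admissible and let f(x,y) = inf_{(i,j)∈A} (ix + jy + a_{ij}) where A ⊆ ℤ², a_{ij} ∈ ℝ, each monomial ix+jy+a_{ij} is nonnegative on Ω, and f is finite. Then for every (x,y) in the interior Ω°, the infimum is attained: there exists (i,j) ∈ A with f(x,y) = ix + jy + a_{ij}. -/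
/-- For an admissible convex closed `Ω ⊆ ℝ²` and a tropical series
`f = inf_{(i,j)∈A} (ix+jy+a_{ij})` with every monomial nonnegative on `Ω`,
the infimum is attained at every interior point of `Ω`. -/
theorem stmt_4 (Ω : Set (ℝ × ℝ)) (hconv : Convex ℝ Ω) (hcl : IsClosed Ω)
    (hint : (interior Ω).Nonempty)
    (hadm : ∃ ij : ℤ × ℤ, ij ≠ (0, 0) ∧
      BddBelow ((fun p : ℝ × ℝ => (ij.1 : ℝ) * p.1 + (ij.2 : ℝ) * p.2) '' Ω))
    (A : Set (ℤ × ℤ)) (a : ℤ × ℤ → ℝ)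
    (hnn : ∀ ij ∈ A, ∀ p ∈ Ω, 0 ≤ (ij.1 : ℝ) * p.1 + (ij.2 : ℝ) * p.2 + a ij)
    (f : ℝ × ℝ → ℝ)
    (hf : ∀ p ∈ Ω,
      IsGLB {v : ℝ | ∃ ij ∈ A, v = (ij.1 : ℝ) * p.1 + (ij.2 : ℝ) * p.2 + a ij} (f p)) :
    ∀ p ∈ interior Ω, ∃ ij ∈ A, f p = (ij.1 : ℝ) * p.1 + (ij.2 : ℝ) * p.2 + a ij := by
  intro p hp
  obtain ⟨ε, hε, hball⟩ := Metric.mem_nhds_iff.mp (mem_interior_iff_mem_nhds.mp hp)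
  have hpΩ : p ∈ Ω := interior_subset hp
  set g : ℤ × ℤ → ℝ := fun ij => (ij.1 : ℝ) * p.1 + (ij.2 : ℝ) * p.2 + a ij with hg
  clear_value g
  have hglb := hf p hpΩ
  -- key bound: for ij ∈ A, (ε/2)*|i| ≤ g ij and (ε/2)*|j| ≤ g ij
  have key : ∀ ij ∈ A, (ε/2) * |(ij.1 : ℝ)| ≤ g ij ∧ (ε/2) * |(ij.2 : ℝ)| ≤ g ij := by
    intro ij hij
    have hmem : ∀ q : ℝ × ℝ, dist q p < ε → 0 ≤ (ij.1 : ℝ) * q.1 + (ij.2 : ℝ) * q.2 + a ij := by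
      intro q hq
      exact hnn ij hij q (hball hq)
    have hd1 : ∀ s : ℝ, |s| = ε/2 →
        0 ≤ (ij.1 : ℝ) * (p.1 + s) + (ij.2 : ℝ) * p.2 + a ij := by
      intro s hs
      apply hmem (p.1 + s, p.2)
      simp [Prod.dist_eq, Real.dist_eq, hs]
      linarith
    have hd2 : ∀ s : ℝ, |s| = ε/2 →
        0 ≤ (ij.1 : ℝ) * p.1 + (ij.2 : ℝ) * (p.2 + s) + a ij := by
      intro s hs
      apply hmem (p.1, p.2 + s)
      simp [Prod.dist_eq, Real.dist_eq, hs]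
      linarith
    have habs : |(ε/2 : ℝ)| = ε/2 := abs_of_pos (by linarith)
    have h1p := hd1 (ε/2) habs
    have h1m := hd1 (-(ε/2)) (by rw [abs_neg]; exact habs)
    have h2p := hd2 (ε/2) habs
    have h2m := hd2 (-(ε/2)) (by rw [abs_neg]; exact habs)
    constructor
    · rcases abs_cases ((ij.1 : ℝ)) with ⟨h, _⟩ | ⟨h, _⟩ <;> rw [h] <;>
        simp only [hg] <;> nlinarith
    · rcases abs_cases ((ij.2 : ℝ)) with ⟨h, _⟩ | ⟨h, _⟩ <;> rw [h] <;>
        simp only [hg] <;> nlinarith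
  -- the set of "small" monomials
  set S : Set (ℤ × ℤ) := {ij | ij ∈ A ∧ g ij ≤ f p + 1} with hS
  have hSne : S.Nonempty := by
    obtain ⟨v, hv, _, hvlt⟩ := hglb.exists_between (by linarith : f p < f p + 1)
    obtain ⟨ij, hij, rfl⟩ := hv
    exact ⟨ij, hij, by simp only [hg]; exact le_of_lt hvlt⟩
  have hSfin : S.Finite := by
    set N : ℤ := ⌈(f p + 1) * 2 / ε⌉ with hN
    apply Set.Finite.subset (Set.finite_Icc ((-N, -N) : ℤ × ℤ) (N, N))
    rintro ij ⟨hijA, hle⟩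
    have hb := key ij hijA
    have bound : ∀ k : ℤ, (ε/2) * |(k : ℝ)| ≤ g ij → -N ≤ k ∧ k ≤ N := by
      intro k hk
      have h1 : |(k : ℝ)| ≤ (f p + 1) * 2 / ε := by
        rw [le_div_iff₀ hε]
        linarith
      have h2 : ((f p + 1) * 2 / ε : ℝ) ≤ (N : ℝ) := Int.le_ceil _
      have h3 : |(k : ℝ)| ≤ (N : ℝ) := le_trans h1 h2
      rw [← Int.cast_abs, Int.cast_le] at h3
      exact ⟨neg_le_of_abs_le h3, le_of_abs_le h3⟩
    obtain ⟨ha1, hb1⟩ := bound ij.1 hb.1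
    obtain ⟨ha2, hb2⟩ := bound ij.2 hb.2
    exact Set.mem_Icc.mpr ⟨⟨ha1, ha2⟩, ⟨hb1, hb2⟩⟩
  obtain ⟨ij0, hij0S, hmin⟩ := Set.exists_min_image S g hSfin hSne
  refine ⟨ij0, hij0S.1, ?_⟩
  have hle1 : f p ≤ g ij0 := hglb.1 ⟨ij0, hij0S.1, by simp only [hg]⟩
  have hle2 : g ij0 ≤ f p := by
    apply hglb.2
    rintro v ⟨ij, hij, rfl⟩
    have hgij : (ij.1 : ℝ) * p.1 + (ij.2 : ℝ) * p.2 + a ij = g ij := by simp only [hg]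
    rw [hgij]
    by_cases hmem : ij ∈ S
    · exact hmin ij hmem
    · have : ¬ g ij ≤ f p + 1 := fun h => hmem ⟨hij, h⟩
      linarith [hij0S.2]
  have h := le_antisymm hle1 hle2
  simpa [hg] using h
end

section
/- Let Ω ⊆ ℝ² be convex and closed, and let f : Ω → ℝ be continuous such that on the interior Ω° the function f is locally a minimum of finitely many affine functions with integer linear parts (a tropical series), and f vanishes on ∂Ω. Then for every (x,y) ∈ Ω°, f(x,y) = inf { ix + jy + a : (i,j,a) such that f coincides with ix+jy+a on some open subset of Ω° }. In particular f is concave on Ω. -/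
noncomputable def aff (a : ℤ × ℤ → ℝ) (ij : ℤ × ℤ) (q : ℝ × ℝ) : ℝ :=
  (ij.1 : ℝ) * q.1 + (ij.2 : ℝ) * q.2 + a ij

lemma aff_cont (a : ℤ × ℤ → ℝ) (ij : ℤ × ℤ) : Continuous (aff a ij) := by
  unfold aff; fun_prop

/-- If on an open nonempty set `B`, `f` is the min of finitely many affine maps,
then some affine map coincides with `f` on an open nonempty subset of `B`. -/
lemma pieces (a : ℤ × ℤ → ℝ) (f : ℝ × ℝ → ℝ) :
    ∀ (n : ℕ) (F : Finset (ℤ × ℤ)) (hF : F.Nonempty), F.card ≤ n →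
    ∀ (B : Set (ℝ × ℝ)), IsOpen B → B.Nonempty →
    (∀ q ∈ B, f q = F.inf' hF (fun ij => aff a ij q)) →
    ∃ ij ∈ F, ∃ U : Set (ℝ × ℝ), IsOpen U ∧ U.Nonempty ∧ U ⊆ B ∧
      ∀ q ∈ U, f q = aff a ij q := by
  intro n
  induction n with
  | zero =>
    intro F hF hcard
    exact absurd (Finset.card_eq_zero.mp (Nat.le_zero.mp hcard)) hF.ne_empty
  | succ n ih =>
    intro F hF hcard B hB hBne hf
    obtain ⟨ij₀, hij₀⟩ := id hF
    by_cases hall : ∀ q ∈ B, f q = aff a ij₀ q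
    · exact ⟨ij₀, hij₀, B, hB, hBne, subset_rfl, hall⟩
    · push_neg at hall
      obtain ⟨q₀, hq₀B, hq₀⟩ := hall
      -- f q₀ < aff a ij₀ q₀
      have hle : f q₀ ≤ aff a ij₀ q₀ := by
        rw [hf q₀ hq₀B]; exact Finset.inf'_le _ hij₀
      have hlt : f q₀ < aff a ij₀ q₀ := lt_of_le_of_ne hle hq₀
      -- some other element attains a strictly smaller value at q₀
      obtain ⟨kl, hklF, hkl⟩ := Finset.exists_mem_eq_inf' hF (fun ij => aff a ij q₀)
      have hklval : aff a kl q₀ < aff a ij₀ q₀ := by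
        rw [← hkl, ← hf q₀ hq₀B]; exact hlt
      have hklne : kl ≠ ij₀ := fun h => absurd hklval (by rw [h]; exact lt_irrefl _)
      -- open set where inf over F is < aff ij₀, via union over F of strict comparisons
      set B' : Set (ℝ × ℝ) := B ∩ ⋃ mn ∈ F.erase ij₀, {q | aff a mn q < aff a ij₀ q} with hB'def
      have hB'open : IsOpen B' := hB.inter (isOpen_biUnion fun mn _ =>
        isOpen_lt (aff_cont a mn) (aff_cont a ij₀))
      have hq₀B' : q₀ ∈ B' := ⟨hq₀B, Set.mem_biUnion (Finset.mem_erase.mpr ⟨hklne, hklF⟩) hklval⟩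
      have herasene : (F.erase ij₀).Nonempty := ⟨kl, Finset.mem_erase.mpr ⟨hklne, hklF⟩⟩
      -- on B', f equals inf over F.erase ij₀
      have hf' : ∀ q ∈ B', f q = (F.erase ij₀).inf' herasene (fun ij => aff a ij q) := by
        rintro q ⟨hqB, hqU⟩
        rw [hf q hqB]
        apply le_antisymm
        · apply Finset.le_inf'
          intro mn hmn
          exact Finset.inf'_le _ (Finset.mem_of_mem_erase hmn)
        · obtain ⟨mn, hmnF, hmn⟩ := Finset.exists_mem_eq_inf' hF (fun ij => aff a ij q)
          rw [hmn]
          rcases eq_or_ne mn ij₀ with h | h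
          · obtain ⟨s, hs⟩ := Set.mem_iUnion.mp hqU
            obtain ⟨hsF, hq⟩ := Set.mem_iUnion.mp hs
            calc (F.erase ij₀).inf' herasene (fun ij => aff a ij q)
                ≤ aff a s q := Finset.inf'_le _ hsF
              _ ≤ aff a mn q := by rw [h]; exact le_of_lt hq
          · exact Finset.inf'_le _ (Finset.mem_erase.mpr ⟨h, hmnF⟩)
      have hcard' : (F.erase ij₀).card ≤ n := by
        have := Finset.card_erase_of_mem hij₀
        omega
      obtain ⟨ij, hijmem, U, hU⟩ := ih (F.erase ij₀) herasene hcard' B' hB'open ⟨q₀, hq₀B'⟩ hf'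
      exact ⟨ij, Finset.mem_of_mem_erase hijmem, U, hU.1, hU.2.1, hU.2.2.1.trans Set.inter_subset_left, hU.2.2.2⟩

lemma midpt (a : ℤ × ℤ → ℝ) (f : ℝ × ℝ → ℝ) (W : Set (ℝ × ℝ))
    (F : Finset (ℤ × ℤ)) (hF : F.Nonempty)
    (hf : ∀ q ∈ W, f q = F.inf' hF (fun ij => aff a ij q))
    {p q r : ℝ × ℝ} (hp : p ∈ W) (hq : q ∈ W) (hr : r ∈ W)
    (hmid : q + r = p + p) : f q + f r ≤ 2 * f p := by
  obtain ⟨ij, hijF, hij⟩ := Finset.exists_mem_eq_inf' hF (fun kl => aff a kl p)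
  have hfp : f p = aff a ij p := by rw [hf p hp, hij]
  have h1 : f q ≤ aff a ij q := by rw [hf q hq]; exact Finset.inf'_le _ hijF
  have h2 : f r ≤ aff a ij r := by rw [hf r hr]; exact Finset.inf'_le _ hijF
  have hsum : aff a ij q + aff a ij r = 2 * aff a ij p := by
    have h1 : q.1 + r.1 = p.1 + p.1 := congrArg Prod.fst hmid
    have h2 : q.2 + r.2 = p.2 + p.2 := congrArg Prod.snd hmid
    unfold aff; linear_combination (ij.1:ℝ) * h1 + (ij.2:ℝ) * h2
  linarith

/-- local-to-global concavity on the interior -/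
lemma concave_interior (Ω : Set (ℝ × ℝ)) (hconv : Convex ℝ Ω)
    (f : ℝ × ℝ → ℝ) (hcont : ContinuousOn f Ω)
    (hloc : ∀ p ∈ interior Ω, ∃ W : Set (ℝ × ℝ), IsOpen W ∧ p ∈ W ∧ W ⊆ interior Ω ∧
      ∃ (F : Finset (ℤ × ℤ)) (hF : F.Nonempty) (a : ℤ × ℤ → ℝ),
        ∀ q ∈ W, f q = F.inf' hF fun ij => (ij.1 : ℝ) * q.1 + (ij.2 : ℝ) * q.2 + a ij) :
    ConcaveOn ℝ (interior Ω) f := by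
  have hIconv : Convex ℝ (interior Ω) := hconv.interior
  refine ⟨hIconv, ?_⟩
  intro x hx y hy α β hα hβ hab
  -- parametrize the segment
  set γ : ℝ → ℝ × ℝ := fun t => x + t • (y - x) with hγ
  have hγ' : ∀ t, γ t = (1 - t) • x + t • y := by
    intro t; simp only [hγ]; module
  have hγmem : ∀ t ∈ Set.Icc (0:ℝ) 1, γ t ∈ interior Ω := by
    intro t ht
    rw [hγ' t]
    exact hIconv hx hy (by linarith [ht.1, ht.2]) ht.1 (by ring)
  set g : ℝ → ℝ := fun t => f (γ t) - ((1 - t) * f x + t * f y) with hg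
  have hγcont : Continuous γ := by fun_prop
  have hgcont : ContinuousOn g (Set.Icc 0 1) := by
    apply ContinuousOn.sub
    · apply hcont.comp hγcont.continuousOn
      intro t ht
      exact interior_subset (hγmem t ht)
    · fun_prop
  have key : ∀ t ∈ Set.Icc (0:ℝ) 1, 0 ≤ g t := by
    by_contra hcon
    push_neg at hcon
    obtain ⟨t₀, ht₀, hgt₀⟩ := hcon
    obtain ⟨t₁, ht₁, hmin⟩ := (isCompact_Icc).exists_isMinOn ⟨t₀, ht₀⟩ hgcont
    set m := g t₁ with hm
    have hmneg : m < 0 := lt_of_le_of_lt (hmin ht₀) hgt₀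
    have hg0 : g 0 = 0 := by simp [hg, hγ]
    have hg1 : g 1 = 0 := by
      simp only [hg, hγ']
      norm_num
    set T := Set.Icc (0:ℝ) 1 ∩ g ⁻¹' {m} with hT
    have hTclosed : IsClosed T := hgcont.preimage_isClosed_of_isClosed isClosed_Icc isClosed_singleton
    have hTne : T.Nonempty := ⟨t₁, ht₁, rfl⟩
    have hTbdd : BddBelow T := ⟨0, fun t ht => ht.1.1⟩
    set t₂ := sInf T with ht₂def
    have ht₂T : t₂ ∈ T := hTclosed.csInf_mem hTne hTbdd
    have ht₂Icc : t₂ ∈ Set.Icc (0:ℝ) 1 := ht₂T.1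
    have hgt₂ : g t₂ = m := ht₂T.2
    have ht₂pos : 0 < t₂ := by
      rcases lt_or_eq_of_le ht₂Icc.1 with h | h
      · exact h
      · exfalso; rw [← h] at hgt₂; rw [hg0] at hgt₂; linarith
    have ht₂lt1 : t₂ < 1 := by
      rcases lt_or_eq_of_le ht₂Icc.2 with h | h
      · exact h
      · exfalso; rw [h] at hgt₂; rw [hg1] at hgt₂; linarith
    -- local structure at γ t₂
    obtain ⟨W, hWopen, hWmem, hWsub, F, hF, A, hfW⟩ := hloc (γ t₂) (hγmem t₂ ht₂Icc)
    obtain ⟨ε, hεpos, hεball⟩ := Metric.isOpen_iff.mp hWopen _ hWmem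
    set δ := min (t₂ / 2) (min ((1 - t₂) / 2) (ε / (2 * (‖y - x‖ + 1)))) with hδdef
    have hδpos : 0 < δ := by
      apply lt_min (by linarith)
      apply lt_min (by linarith)
      positivity
    have hδt : δ ≤ t₂ / 2 := min_le_left _ _
    have hδ1 : δ ≤ (1 - t₂) / 2 := le_trans (min_le_right _ _) (min_le_left _ _)
    have hδε : δ ≤ ε / (2 * (‖y - x‖ + 1)) := le_trans (min_le_right _ _) (min_le_right _ _)
    have hball : ∀ s : ℝ, |s| ≤ δ → γ (t₂ + s) ∈ W := by
      intro s hs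
      apply hεball
      rw [Metric.mem_ball]
      have : γ (t₂ + s) - γ t₂ = s • (y - x) := by simp only [hγ]; module
      rw [dist_eq_norm, this, norm_smul, Real.norm_eq_abs]
      calc |s| * ‖y - x‖ ≤ δ * (‖y - x‖ + 1) := by
            apply mul_le_mul hs (by linarith) (norm_nonneg _) (le_of_lt hδpos)
        _ ≤ (ε / (2 * (‖y - x‖ + 1))) * (‖y - x‖ + 1) := by
            apply mul_le_mul_of_nonneg_right hδε (by positivity)
        _ = ε / 2 := by field_simp
        _ < ε := by linarith
    have hq := hball (-δ) (by rw [abs_neg, abs_of_pos hδpos])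
    have hr := hball δ (by rw [abs_of_pos hδpos])
    have hp := hball 0 (by simp [le_of_lt hδpos])
    rw [add_zero] at hp
    have hmid : γ (t₂ + -δ) + γ (t₂ + δ) = γ t₂ + γ t₂ := by
      simp only [hγ]; module
    have hineq := midpt A f W F hF (by intro q hq'; exact hfW q hq') hp hq hr hmid
    -- translate to g
    have hgq : g (t₂ + -δ) + g (t₂ + δ) ≤ 2 * g t₂ := by
      simp only [hg]
      have : (1 - (t₂ + -δ)) * f x + (t₂ + -δ) * f y + ((1 - (t₂ + δ)) * f x + (t₂ + δ) * f y)
          = 2 * ((1 - t₂) * f x + t₂ * f y) := by ring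
      linarith [hineq]
    have hmem1 : t₂ + -δ ∈ Set.Icc (0:ℝ) 1 := ⟨by linarith, by linarith⟩
    have hmem2 : t₂ + δ ∈ Set.Icc (0:ℝ) 1 := ⟨by linarith, by linarith⟩
    have h1 : m ≤ g (t₂ + -δ) := hmin hmem1
    have h2 : m ≤ g (t₂ + δ) := hmin hmem2
    have heq : g (t₂ + -δ) = m := by rw [hgt₂] at hgq; linarith
    have : t₂ ≤ t₂ + -δ := csInf_le hTbdd ⟨hmem1, heq⟩
    linarith
  -- conclude
  have hbm : β ∈ Set.Icc (0:ℝ) 1 := ⟨hβ, by linarith⟩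
  have h0 := key β hbm
  have hcombo : γ β = α • x + β • y := by
    rw [hγ' β]
    congr 1
    rw [show (1:ℝ) - β = α by linarith]
  simp only [hg] at h0
  rw [hcombo, show (1:ℝ) - β = α by linarith] at h0
  simp only [smul_eq_mul]
  linarith

lemma aff_combo (a : ℤ × ℤ → ℝ) (ij : ℤ × ℤ) (s t : ℝ) (hst : s + t = 1) (q r : ℝ × ℝ) :
    aff a ij (s • q + t • r) = s * aff a ij q + t * aff a ij r := by
  simp only [aff, Prod.smul_fst, Prod.smul_snd, Prod.fst_add, Prod.snd_add, smul_eq_mul]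
  linear_combination (- a ij) * hst

/-- If a concave function coincides with an affine map on a nonempty open set,
it is dominated by that affine map everywhere. -/
lemma lower_bound (S : Set (ℝ × ℝ)) (f : ℝ × ℝ → ℝ) (hconc : ConcaveOn ℝ S f)
    (a : ℤ × ℤ → ℝ) (ij : ℤ × ℤ) (U : Set (ℝ × ℝ)) (hUopen : IsOpen U)
    (hUne : U.Nonempty) (hUsub : U ⊆ S) (hfU : ∀ q ∈ U, f q = aff a ij q)
    (p : ℝ × ℝ) (hp : p ∈ S) : f p ≤ aff a ij p := by
  obtain ⟨u, hu⟩ := hUne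
  rcases eq_or_ne p u with rfl | hne
  · exact le_of_eq (hfU p hu)
  obtain ⟨ε, hεpos, hεball⟩ := Metric.isOpen_iff.mp hUopen u hu
  have hd : 0 < ‖u - p‖ := by
    rw [norm_pos_iff, sub_ne_zero]; exact fun h => hne h.symm
  set s := ε / (2 * ‖u - p‖) with hs
  have hspos : 0 < s := by positivity
  set w := u + s • (u - p) with hw
  have hwU : w ∈ U := by
    apply hεball
    rw [Metric.mem_ball, dist_eq_norm]
    have : w - u = s • (u - p) := by rw [hw]; abel
    rw [this, norm_smul, Real.norm_eq_abs, abs_of_pos hspos, hs]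
    rw [div_mul_eq_mul_div]
    rw [div_lt_iff₀ (by positivity)]
    nlinarith
  set α := s / (1 + s) with hα
  set β := 1 / (1 + s) with hβ
  have h1s : (0:ℝ) < 1 + s := by linarith
  have hαpos : 0 < α := by positivity
  have hβpos : 0 < β := by positivity
  have hab : α + β = 1 := by rw [hα, hβ]; field_simp; ring
  have hcombo : α • p + β • w = u := by
    rw [hw, hα, hβ]
    have h1s' : (1:ℝ) + s ≠ 0 := ne_of_gt h1s
    match_scalars <;> field_simp <;> ring
  have hconcineq := hconc.2 hp (hUsub hwU) (le_of_lt hαpos) (le_of_lt hβpos) hab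
  rw [hcombo] at hconcineq
  rw [hfU u hu] at hconcineq
  rw [hfU w hwU] at hconcineq
  have haffu : aff a ij u = α * aff a ij p + β * aff a ij w := by
    rw [← hcombo]; exact aff_combo a ij α β hab p w
  simp only [smul_eq_mul] at hconcineq
  nlinarith [hαpos]

/-- Extend concavity from the interior to the closed convex set by continuity. -/
lemma concave_closure (Ω : Set (ℝ × ℝ)) (hconv : Convex ℝ Ω) (hcl : IsClosed Ω)
    (hint : (interior Ω).Nonempty) (f : ℝ × ℝ → ℝ) (hcont : ContinuousOn f Ω)
    (hconc : ConcaveOn ℝ (interior Ω) f) : ConcaveOn ℝ Ω f := by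
  refine ⟨hconv, ?_⟩
  intro x hx y hy α β hα hβ hab
  rcases eq_or_lt_of_le hα with h | hαpos
  · have hβ1 : β = 1 := by linarith
    simp [← h, hβ1]
  rcases eq_or_lt_of_le hβ with h | hβpos
  · have hα1 : α = 1 := by linarith
    simp [← h, hα1]
  obtain ⟨z, hz⟩ := hint
  have hxcl : x ∈ closure Ω := subset_closure hx
  have hycl : y ∈ closure Ω := subset_closure hy
  -- for s ∈ (0,1], the perturbed points are in the interior
  have hxs : ∀ s : ℝ, 0 < s → s ≤ 1 → s • z + (1 - s) • x ∈ interior Ω :=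
    fun s hs hs1 => hconv.combo_interior_closure_mem_interior hz hxcl hs (by linarith) (by ring)
  have hys : ∀ s : ℝ, 0 < s → s ≤ 1 → s • z + (1 - s) • y ∈ interior Ω :=
    fun s hs hs1 => hconv.combo_interior_closure_mem_interior hz hycl hs (by linarith) (by ring)
  have hcs : ∀ s : ℝ, 0 < s → s ≤ 1 →
      s • z + (1 - s) • (α • x + β • y) ∈ interior Ω := by
    intro s hs hs1
    have : α • x + β • y ∈ closure Ω := subset_closure (hconv hx hy hα hβ hab)
    exact hconv.combo_interior_closure_mem_interior hz this hs (by linarith) (by ring)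
  -- the key inequality for s ∈ (0,1]
  have hkey : ∀ s : ℝ, 0 < s → s ≤ 1 →
      α * f (s • z + (1 - s) • x) + β * f (s • z + (1 - s) • y)
        ≤ f (s • z + (1 - s) • (α • x + β • y)) := by
    intro s hs hs1
    have h := hconc.2 (hxs s hs hs1) (hys s hs hs1) hα hβ hab
    have hcomb : α • (s • z + (1 - s) • x) + β • (s • z + (1 - s) • y)
        = s • z + (1 - s) • (α • x + β • y) := by
      rw [show β = 1 - α from by linarith]
      match_scalars <;> ring
    rw [hcomb] at h
    simpa using h
  -- pass to the limit s → 0⁺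
  set l : Filter ℝ := nhdsWithin 0 (Set.Ioc (0:ℝ) 1) with hl
  have hlne : l.NeBot := by
    rw [hl]
    exact left_nhdsWithin_Ioc_neBot (by norm_num)
  have hcurve : ∀ c : ℝ × ℝ, c ∈ Ω →
      Filter.Tendsto (fun s : ℝ => f (s • z + (1 - s) • c)) l (nhds (f c)) := by
    intro c hc
    have htend : Filter.Tendsto (fun s : ℝ => s • z + (1 - s) • c) l (nhds c) := by
      have hc0 : Filter.Tendsto (fun s : ℝ => s • z + (1 - s) • c) (nhds 0)
          (nhds ((0:ℝ) • z + (1 - (0:ℝ)) • c)) :=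
        ((continuous_id.smul continuous_const).add
          ((continuous_const.sub continuous_id).smul continuous_const)).tendsto 0
      rw [zero_smul, zero_add, sub_zero, one_smul] at hc0
      exact hc0.mono_left nhdsWithin_le_nhds
    have hmem : ∀ᶠ s in l, (s • z + (1 - s) • c) ∈ Ω := by
      apply eventually_nhdsWithin_of_forall
      intro s hs
      exact interior_subset (hconv.combo_interior_closure_mem_interior hz (subset_closure hc)
        hs.1 (by linarith [hs.2]) (by ring))
    have : Filter.Tendsto (fun s : ℝ => s • z + (1 - s) • c) l (nhdsWithin c Ω) :=
      tendsto_nhdsWithin_iff.mpr ⟨htend, hmem⟩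
    exact (hcont c hc).tendsto.comp this
  have hxlim := hcurve x hx
  have hylim := hcurve y hy
  have hclim := hcurve (α • x + β • y) (hconv hx hy hα hβ hab)
  have hLHS : Filter.Tendsto (fun s : ℝ => α * f (s • z + (1 - s) • x) + β * f (s • z + (1 - s) • y))
      l (nhds (α * f x + β * f y)) := by
    exact ((hxlim.const_mul α).add (hylim.const_mul β))
  have hfinal : α * f x + β * f y ≤ f (α • x + β • y) := by
    apply le_of_tendsto_of_tendsto hLHS hclim
    apply eventually_nhdsWithin_of_forall
    intro s hs
    exact hkey s hs.1 hs.2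
  simpa using hfinal

theorem main_piece (Ω : Set (ℝ × ℝ)) (f : ℝ × ℝ → ℝ)
    (p : ℝ × ℝ) (hp : p ∈ interior Ω)
    (W : Set (ℝ × ℝ)) (hWopen : IsOpen W) (hpW : p ∈ W) (hWsub : W ⊆ interior Ω)
    (F : Finset (ℤ × ℤ)) (hF : F.Nonempty) (A : ℤ × ℤ → ℝ)
    (hfW : ∀ q ∈ W, f q = F.inf' hF fun ij => aff A ij q)
    (pieces : ∀ (n : ℕ) (F : Finset (ℤ × ℤ)) (hF : F.Nonempty), F.card ≤ n →
      ∀ (B : Set (ℝ × ℝ)), IsOpen B → B.Nonempty →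
      (∀ q ∈ B, f q = F.inf' hF (fun ij => aff A ij q)) →
      ∃ ij ∈ F, ∃ U : Set (ℝ × ℝ), IsOpen U ∧ U.Nonempty ∧ U ⊆ B ∧
        ∀ q ∈ U, f q = aff A ij q) :
    ∃ ij : ℤ × ℤ, aff A ij p = f p ∧ ∃ U : Set (ℝ × ℝ), IsOpen U ∧ U.Nonempty ∧
      U ⊆ interior Ω ∧ ∀ q ∈ U, f q = aff A ij q := by
  classical
  set F' : Finset (ℤ × ℤ) := F.filter (fun ij => aff A ij p = f p) with hF'def
  obtain ⟨kl₀, hkl₀F, hkl₀⟩ := Finset.exists_mem_eq_inf' hF (fun ij => aff A ij p)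
  have hkl₀F' : kl₀ ∈ F' := by
    rw [hF'def, Finset.mem_filter]
    exact ⟨hkl₀F, by rw [← hkl₀, hfW p hpW]⟩
  have hF' : F'.Nonempty := ⟨kl₀, hkl₀F'⟩
  set V : Set (ℝ × ℝ) :=
    ⋂ mn ∈ (F \ F'), ⋃ kl ∈ F', {q | aff A kl q < aff A mn q} with hVdef
  have hVopen : IsOpen V := by
    apply isOpen_biInter_finset
    intro mn _
    apply isOpen_biUnion
    intro kl _
    exact isOpen_lt (by unfold aff; fun_prop) (by unfold aff; fun_prop)
  have hpV : p ∈ V := by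
    rw [hVdef]
    simp only [Set.mem_iInter]
    intro mn hmn
    rw [Finset.mem_sdiff] at hmn
    have h1 : f p ≤ aff A mn p := by
      rw [hfW p hpW]; exact Finset.inf'_le _ hmn.1
    have h2 : f p ≠ aff A mn p := by
      intro h
      exact hmn.2 (Finset.mem_filter.mpr ⟨hmn.1, h.symm⟩)
    refine Set.mem_biUnion hkl₀F' ?_
    have : aff A kl₀ p = f p := (Finset.mem_filter.mp hkl₀F').2
    rw [Set.mem_setOf_eq, this]
    exact lt_of_le_of_ne h1 h2
  set B := W ∩ V with hBdef
  have hBopen : IsOpen B := hWopen.inter hVopen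
  have hpB : p ∈ B := ⟨hpW, hpV⟩
  have hfB : ∀ q ∈ B, f q = F'.inf' hF' (fun ij => aff A ij q) := by
    rintro q ⟨hqW, hqV⟩
    rw [hfW q hqW]
    apply le_antisymm
    · apply Finset.le_inf'
      intro mn hmn
      exact Finset.inf'_le _ (Finset.filter_subset _ _ hmn)
    · obtain ⟨mn, hmnF, hmn⟩ := Finset.exists_mem_eq_inf' hF (fun ij => aff A ij q)
      rw [hmn]
      by_cases h : mn ∈ F'
      · exact Finset.inf'_le _ h
      · rw [hVdef] at hqV
        simp only [Set.mem_iInter] at hqV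
        have := hqV mn (Finset.mem_sdiff.mpr ⟨hmnF, h⟩)
        obtain ⟨kl, hkl⟩ := Set.mem_iUnion.mp this
        obtain ⟨hklF', hq⟩ := Set.mem_iUnion.mp hkl
        exact le_trans (Finset.inf'_le _ hklF') (le_of_lt hq)
  obtain ⟨ij, hijF', U, hUopen, hUne, hUsub, hfU⟩ :=
    pieces F'.card F' hF' le_rfl B hBopen ⟨p, hpB⟩ hfB
  refine ⟨ij, (Finset.mem_filter.mp hijF').2, U, hUopen, hUne, ?_, hfU⟩
  exact hUsub.trans (Set.inter_subset_left.trans hWsub)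

/-- Let `Ω ⊆ ℝ²` be convex closed and `f : Ω → ℝ` continuous, locally a finite
minimum of affine functions with integer linear parts on the interior, and
vanishing on the boundary. Then on the interior, `f` equals the infimum of all
affine functions with integer slope that coincide with `f` on some open subset;
in particular `f` is concave on `Ω`. -/
theorem stmt_5 (Ω : Set (ℝ × ℝ)) (hconv : Convex ℝ Ω) (hcl : IsClosed Ω)
    (hint : (interior Ω).Nonempty) (f : ℝ × ℝ → ℝ) (hcont : ContinuousOn f Ω)
    (hloc : ∀ p ∈ interior Ω, ∃ W : Set (ℝ × ℝ), IsOpen W ∧ p ∈ W ∧ W ⊆ interior Ω ∧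
      ∃ (F : Finset (ℤ × ℤ)) (hF : F.Nonempty) (a : ℤ × ℤ → ℝ),
        ∀ q ∈ W, f q = F.inf' hF fun ij => (ij.1 : ℝ) * q.1 + (ij.2 : ℝ) * q.2 + a ij)
    (hbd : ∀ p ∈ frontier Ω, f p = 0) :
    (∀ p ∈ interior Ω, f p = sInf {v : ℝ | ∃ (i j : ℤ) (c : ℝ),
        (∃ U : Set (ℝ × ℝ), IsOpen U ∧ U.Nonempty ∧ U ⊆ interior Ω ∧
          ∀ q ∈ U, f q = (i : ℝ) * q.1 + (j : ℝ) * q.2 + c) ∧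
        v = (i : ℝ) * p.1 + (j : ℝ) * p.2 + c}) ∧
    ConcaveOn ℝ Ω f := by
  have hconcI : ConcaveOn ℝ (interior Ω) f := concave_interior Ω hconv f hcont hloc
  have hconcΩ : ConcaveOn ℝ Ω f := concave_closure Ω hconv hcl hint f hcont hconcI
  refine ⟨?_, hconcΩ⟩
  intro p hp
  obtain ⟨W, hWopen, hpW, hWsub, F, hF, A, hfW⟩ := hloc p hp
  have hfW' : ∀ q ∈ W, f q = F.inf' hF fun ij => aff A ij q := hfW
  obtain ⟨ij, hijp, U, hUopen, hUne, hUsub, hfU⟩ :=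
    main_piece Ω f p hp W hWopen hpW hWsub F hF A hfW' (pieces A f)
  set S : Set ℝ := {v : ℝ | ∃ (i j : ℤ) (c : ℝ),
      (∃ U : Set (ℝ × ℝ), IsOpen U ∧ U.Nonempty ∧ U ⊆ interior Ω ∧
        ∀ q ∈ U, f q = (i : ℝ) * q.1 + (j : ℝ) * q.2 + c) ∧
      v = (i : ℝ) * p.1 + (j : ℝ) * p.2 + c} with hSdef
  have hmem : f p ∈ S := by
    refine ⟨ij.1, ij.2, A ij, ⟨U, hUopen, hUne, hUsub, fun q hq => hfU q hq⟩, ?_⟩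
    exact hijp.symm
  have hlb : ∀ v ∈ S, f p ≤ v := by
    rintro v ⟨i, j, c, ⟨U', hU'open, hU'ne, hU'sub, hfU'⟩, rfl⟩
    exact lower_bound (interior Ω) f hconcI (fun _ => c) (i, j) U' hU'open hU'ne hU'sub
      (fun q hq => hfU' q hq) p hp
  exact le_antisymm (le_csInf ⟨f p, hmem⟩ hlb) (csInf_le ⟨f p, hlb⟩ hmem)
end

section
/- 1-Lipschitz property of wave operators with respect to the coefficient sup-metric: let f = min_{(i,j)∈B}(ix+jy+a_{ij}) and g = min_{(i,j)∈B}(ix+jy+b_{ij}) be two Ω-tropical series over the same index set B in canonical form, define ρ(f,g) = sup_B |a_{ij} − b_{ij}|. Then for any p ∈ Ω°, ρ(G_p f, G_p g) ≤ ρ(f,g). -/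
def IsOmegaTropSeries (Ω : Set (ℝ × ℝ)) (f : ℝ × ℝ → ℝ) : Prop :=
  ContinuousOn f Ω ∧ (∀ z ∈ Ω, 0 ≤ f z) ∧ (∀ z ∈ frontier Ω, f z = 0) ∧
  ∃ (A : Set (ℤ × ℤ)) (a : ℤ × ℤ → ℝ), ∀ z ∈ interior Ω,
    IsGLB {v : ℝ | ∃ ij ∈ A, v = (ij.1 : ℝ) * z.1 + (ij.2 : ℝ) * z.2 + a ij} (f z)

def waveSet (Ω P : Set (ℝ × ℝ)) (f : ℝ × ℝ → ℝ) : Set (ℝ × ℝ → ℝ) :=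
  {g | IsOmegaTropSeries Ω g ∧ (∀ z ∈ Ω, f z ≤ g z) ∧ ∀ p ∈ P, ¬ DifferentiableAt ℝ g p}

noncomputable def waveOp (Ω P : Set (ℝ × ℝ)) (f : ℝ × ℝ → ℝ) (z : ℝ × ℝ) : ℝ :=
  sInf {v : ℝ | ∃ g ∈ waveSet Ω P f, v = g z}

/-- The canonical (minimal) coefficient of the monomial `ix+jy` in a representation
of `h` as a tropical series on `Ω`. -/
noncomputable def canonCoef (Ω : Set (ℝ × ℝ)) (h : ℝ × ℝ → ℝ) (ij : ℤ × ℤ) : ℝ :=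
  sSup ((fun z => h z - (ij.1 : ℝ) * z.1 - (ij.2 : ℝ) * z.2) '' Ω)

/-!
If `h` is an `Ω`-tropical series above `g` that is not smooth at `p`, then for `n` large the
series `min (h + r, n • h + f)` is above `f` (as `h ≥ g ≥ f - r` and `h ≥ 0`), vanishes on
`∂Ω`, and agrees with `h + r` near `p`, so it is not smooth at `p` either. The last point uses
`h p > 0`: a nonnegative infimum of affine functions vanishing at an interior point vanishes
nearby, hence is smooth there. So `G_p f ≤ G_p g + r` on `Ω`, symmetrically, and the canonical
coefficients, being suprema of `G_p f - i x - j y` over `Ω`, move by at most `r` as well.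
-/

open Set Filter Topology
open scoped Pointwise

lemma sSup_le_sSup_add_of_forall_exists_le {S T : Set ℝ} {r : ℝ} (hr : 0 ≤ r)
    (hST : ∀ s ∈ S, ∃ t ∈ T, s ≤ t + r) (hTS : ∀ t ∈ T, ∃ s ∈ S, t ≤ s + r) :
    sSup S ≤ sSup T + r := by
  rcases S.eq_empty_or_nonempty with rfl | hS
  · have hT : T = ∅ := eq_empty_of_forall_notMem fun t ht ↦ by
      obtain ⟨s, hs, -⟩ := hTS t ht
      exact hs
    simp [hT, hr]
  by_cases hT : BddAbove T
  · refine csSup_le hS fun s hs ↦ ?_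
    obtain ⟨t, ht, hst⟩ := hST s hs
    linarith [le_csSup hT ht]
  · have hS' : ¬ BddAbove S := fun ⟨M, hM⟩ ↦ hT ⟨M + r, fun t ht ↦ by
      obtain ⟨s, hs, hts⟩ := hTS t ht
      linarith [hM hs]⟩
    simp [Real.sSup_of_not_bddAbove hT, Real.sSup_of_not_bddAbove hS', hr]

lemma abs_sSup_sub_sSup_le {S T : Set ℝ} {r : ℝ} (hr : 0 ≤ r)
    (hST : ∀ s ∈ S, ∃ t ∈ T, s ≤ t + r) (hTS : ∀ t ∈ T, ∃ s ∈ S, t ≤ s + r) :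
    |sSup S - sSup T| ≤ r :=
  abs_sub_le_iff.2 ⟨by linarith [sSup_le_sSup_add_of_forall_exists_le hr hST hTS],
    by linarith [sSup_le_sSup_add_of_forall_exists_le hr hTS hST]⟩

lemma abs_sInf_sub_sInf_le {S T : Set ℝ} {r : ℝ} (hr : 0 ≤ r)
    (hST : ∀ s ∈ S, ∃ t ∈ T, t ≤ s + r) (hTS : ∀ t ∈ T, ∃ s ∈ S, s ≤ t + r) :
    |sInf S - sInf T| ≤ r := by
  rw [Real.sInf_def, Real.sInf_def, neg_sub_neg]
  refine abs_sSup_sub_sSup_le hr (fun t ht ↦ ?_) (fun s hs ↦ ?_)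
  · obtain ⟨s, hs, hst⟩ := hTS (-t) ht
    exact ⟨-s, by simpa using hs, by linarith⟩
  · obtain ⟨t, ht, hts⟩ := hST (-s) hs
    exact ⟨-t, by simpa using ht, by linarith⟩

def coeffValues (A : Set (ℤ × ℤ)) (a : ℤ × ℤ → ℝ) (z : ℝ × ℝ) : Set ℝ :=
  {v : ℝ | ∃ ij ∈ A, v = (ij.1 : ℝ) * z.1 + (ij.2 : ℝ) * z.2 + a ij}

lemma abs_sub_le_of_isGLB_coeffValues {A : Set (ℤ × ℤ)} {a b : ℤ × ℤ → ℝ} {z : ℝ × ℝ}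
    {x y r : ℝ} (hx : IsGLB (coeffValues A a z) x) (hy : IsGLB (coeffValues A b z) y)
    (hab : ∀ ij ∈ A, |a ij - b ij| ≤ r) : |x - y| ≤ r := by
  have hxy : x - r ≤ y := hy.2 <| by
    rintro _ ⟨ij, hij, rfl⟩
    linarith [hx.1 ⟨ij, hij, rfl⟩, (abs_le.1 (hab ij hij)).2]
  have hyx : y - r ≤ x := hx.2 <| by
    rintro _ ⟨ij, hij, rfl⟩
    linarith [hy.1 ⟨ij, hij, rfl⟩, (abs_le.1 (hab ij hij)).1]
  exact abs_sub_le_iff.2 ⟨by linarith, by linarith⟩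

/-- A term `((i, j), c)` encodes the monomial `i x + j y + c`. Unlike a coefficient function, a
set of terms may repeat an exponent, so sums and minima of series are easy to represent. -/
def termValue (z : ℝ × ℝ) : (ℤ × ℤ) × ℝ →+ ℝ where
  toFun w := (w.1.1 : ℝ) * z.1 + (w.1.2 : ℝ) * z.2 + w.2
  map_zero' := by simp
  map_add' _ _ := by simp only [Prod.fst_add, Prod.snd_add]; push_cast; ring

@[simp]
lemma termValue_apply (z : ℝ × ℝ) (w : (ℤ × ℤ) × ℝ) :
    termValue z w = (w.1.1 : ℝ) * z.1 + (w.1.2 : ℝ) * z.2 + w.2 :=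
  rfl

def IsTropicalOn (U : Set (ℝ × ℝ)) (f : ℝ × ℝ → ℝ) : Prop :=
  ∃ R : Set ((ℤ × ℤ) × ℝ), ∀ z ∈ U, IsGLB (termValue z '' R) (f z)

namespace IsTropicalOn

variable {U : Set (ℝ × ℝ)} {f g : ℝ × ℝ → ℝ}

lemma of_coeffs {A : Set (ℤ × ℤ)} {a : ℤ × ℤ → ℝ}
    (hf : ∀ z ∈ U, IsGLB (coeffValues A a z) (f z)) : IsTropicalOn U f := by
  refine ⟨(fun ij ↦ (ij, a ij)) '' A, fun z hz ↦ ?_⟩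
  convert hf z hz using 1
  ext v
  simp [coeffValues, eq_comm]

/-- Among the terms with a given exponent only the infimum of their constants matters. -/
lemma exists_coeffs (hf : IsTropicalOn U f) :
    ∃ (A : Set (ℤ × ℤ)) (a : ℤ × ℤ → ℝ), ∀ z ∈ U, IsGLB (coeffValues A a z) (f z) := by
  obtain ⟨R, hR⟩ := hf
  refine ⟨Prod.fst '' R, fun ij ↦ sInf {c | (ij, c) ∈ R}, fun z hz ↦ ⟨?_, fun m hm ↦ ?_⟩⟩
  · rintro _ ⟨_, ⟨⟨ij, c₀⟩, hc₀, rfl⟩, rfl⟩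
    have : f z - (ij.1 : ℝ) * z.1 - (ij.2 : ℝ) * z.2 ≤ sInf {c | (ij, c) ∈ R} :=
      le_csInf ⟨c₀, hc₀⟩ fun c hc ↦ by
        linarith [(hR z hz).1 ⟨(ij, c), hc, rfl⟩, termValue_apply z (ij, c)]
    linarith
  · refine (hR z hz).2 ?_
    rintro _ ⟨⟨ij, c⟩, hc, rfl⟩
    have hbdd : BddBelow {c | (ij, c) ∈ R} :=
      ⟨f z - (ij.1 : ℝ) * z.1 - (ij.2 : ℝ) * z.2, fun c' hc' ↦ by
        linarith [(hR z hz).1 ⟨(ij, c'), hc', rfl⟩, termValue_apply z (ij, c')]⟩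
    have hle : sInf {c | (ij, c) ∈ R} ≤ c := csInf_le hbdd hc
    have := hm ⟨ij, ⟨(ij, c), hc, rfl⟩, rfl⟩
    simp only [termValue_apply]
    linarith

lemma const (c : ℝ) : IsTropicalOn U fun _ ↦ c :=
  ⟨{(0, c)}, fun z _ ↦ by simp⟩

lemma add (hf : IsTropicalOn U f) (hg : IsTropicalOn U g) : IsTropicalOn U (f + g) := by
  obtain ⟨R, hR⟩ := hf
  obtain ⟨S, hS⟩ := hg
  exact ⟨R + S, fun z hz ↦ by rw [Set.image_add]; exact (hR z hz).add (hS z hz)⟩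

lemma inf (hf : IsTropicalOn U f) (hg : IsTropicalOn U g) : IsTropicalOn U (f ⊓ g) := by
  obtain ⟨R, hR⟩ := hf
  obtain ⟨S, hS⟩ := hg
  exact ⟨R ∪ S, fun z hz ↦ by rw [Set.image_union]; exact (hR z hz).union (hS z hz)⟩

lemma nsmul (hf : IsTropicalOn U f) (n : ℕ) : IsTropicalOn U (n • f) := by
  induction n with
  | zero => rw [zero_nsmul]; exact const 0
  | succ n ih => rw [succ_nsmul]; exact ih.add hf

lemma add_le_two_mul (hf : IsTropicalOn U f) {z w m : ℝ × ℝ} (hz : z ∈ U) (hw : w ∈ U)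
    (hm : m ∈ U) (hzw : z + w = m + m) : f z + f w ≤ 2 * f m := by
  obtain ⟨R, hR⟩ := hf
  have h₁ : z.1 + w.1 = m.1 + m.1 := congrArg Prod.fst hzw
  have h₂ : z.2 + w.2 = m.2 + m.2 := congrArg Prod.snd hzw
  have : (f z + f w) / 2 ≤ f m := (hR m hm).2 <| by
    rintro _ ⟨t, ht, rfl⟩
    have hzt := (hR z hz).1 ⟨t, ht, rfl⟩
    have hwt := (hR w hw).1 ⟨t, ht, rfl⟩
    simp only [termValue_apply] at hzt hwt ⊢
    linear_combination (hzt + hwt) / 2 + (t.1.1 : ℝ) / 2 * h₁ + (t.1.2 : ℝ) / 2 * h₂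
  linarith

lemma eventuallyEq_zero {p : ℝ × ℝ} (hf : IsTropicalOn U f) (hU : U ∈ 𝓝 p)
    (hnn : ∀ z ∈ U, 0 ≤ f z) (hp : f p = 0) : f =ᶠ[𝓝 p] 0 := by
  have hreflect : Tendsto (fun z ↦ p + p - z) (𝓝 p) (𝓝 p) :=
    (continuous_const.sub continuous_id).tendsto' p p (add_sub_cancel_right p p)
  filter_upwards [hU, hreflect hU] with z hz hz'
  show f z = 0
  have := hf.add_le_two_mul hz hz' (mem_of_mem_nhds hU) (add_sub_cancel z (p + p))
  linarith [hnn z hz, hnn _ hz']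

end IsTropicalOn

lemma isOmegaTropSeries_iff {Ω : Set (ℝ × ℝ)} {f : ℝ × ℝ → ℝ} :
    IsOmegaTropSeries Ω f ↔ ContinuousOn f Ω ∧ (∀ z ∈ Ω, 0 ≤ f z) ∧
      (∀ z ∈ frontier Ω, f z = 0) ∧ IsTropicalOn (interior Ω) f := by
  refine and_congr_right' <| and_congr_right' <| and_congr_right' ⟨?_, IsTropicalOn.exists_coeffs⟩
  exact fun ⟨_, _, h⟩ ↦ IsTropicalOn.of_coeffs h

lemma IsOmegaTropSeries.pos_of_not_differentiableAt {Ω : Set (ℝ × ℝ)} {h : ℝ × ℝ → ℝ}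
    {p : ℝ × ℝ} (hh : IsOmegaTropSeries Ω h) (hp : p ∈ interior Ω)
    (hd : ¬ DifferentiableAt ℝ h p) : 0 < h p := by
  obtain ⟨-, hnn, -, htrop⟩ := isOmegaTropSeries_iff.1 hh
  refine (hnn p (interior_subset hp)).lt_of_ne fun h0 ↦ hd ?_
  have := htrop.eventuallyEq_zero (isOpen_interior.mem_nhds hp)
    (fun z hz ↦ hnn z (interior_subset hz)) h0.symm
  exact this.differentiableAt_iff.2 (differentiableAt_const 0)

lemma exists_mem_waveSet_le_add {Ω : Set (ℝ × ℝ)} {f g h : ℝ × ℝ → ℝ} {p : ℝ × ℝ} {r : ℝ}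
    (hf : IsOmegaTropSeries Ω f) (hp : p ∈ interior Ω) (hr : 0 ≤ r)
    (hfg : ∀ z ∈ Ω, f z ≤ g z + r) (hh : h ∈ waveSet Ω {p} g) :
    ∃ h' ∈ waveSet Ω {p} f, ∀ z ∈ Ω, h' z ≤ h z + r := by
  obtain ⟨hhΩ, hgh, hnd⟩ := hh
  have hpos := hhΩ.pos_of_not_differentiableAt hp (hnd p rfl)
  obtain ⟨hcont, hnn, hbd, htrop⟩ := isOmegaTropSeries_iff.1 hhΩ
  obtain ⟨hfcont, hfnn, hfbd, hftrop⟩ := isOmegaTropSeries_iff.1 hf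
  obtain ⟨n, hn⟩ := exists_lt_nsmul hpos (h p + r - f p)
  set k : ℝ × ℝ → ℝ := n • h + f
  have hfk : ∀ z ∈ Ω, f z ≤ min (h z + r) (k z) := fun z hz ↦
    le_min (by linarith [hfg z hz, hgh z hz])
      (by simpa [k] using nsmul_nonneg (hnn z hz) n)
  have hnear : (fun z ↦ min (h z + r) (k z)) =ᶠ[𝓝 p] fun z ↦ h z + r := by
    have hΩ : Ω ∈ 𝓝 p := mem_interior_iff_mem_nhds.1 hp
    have hhp := hcont.continuousAt hΩ
    have hfp := hfcont.continuousAt hΩ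
    have hkh : ContinuousAt (fun z ↦ k z - (h z + r)) p :=
      ((hhp.const_smul n).add hfp).sub (hhp.add_const r)
    have hkp : 0 < k p - (h p + r) := by
      simp only [k, Pi.add_apply, Pi.smul_apply]
      linarith
    filter_upwards [hkh.eventually (eventually_gt_nhds hkp)] with z hz
    exact min_eq_left (by linarith)
  refine ⟨fun z ↦ min (h z + r) (k z), ⟨isOmegaTropSeries_iff.2 ⟨?_, ?_, ?_, ?_⟩, hfk, ?_⟩,
    fun z _ ↦ min_le_left _ _⟩
  · exact ContinuousOn.inf (hcont.add continuousOn_const) ((hcont.const_smul n).add hfcont)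
  · exact fun z hz ↦ (hfnn z hz).trans (hfk z hz)
  · intro z hz
    simp [k, hbd z hz, hfbd z hz, hr]
  · exact (htrop.add (IsTropicalOn.const r)).inf ((htrop.nsmul n).add hftrop)
  · rintro q rfl hd
    exact hnd q rfl ((differentiableAt_add_const_iff r).1 (hnear.differentiableAt_iff.1 hd))

lemma abs_waveOp_sub_waveOp_le {Ω : Set (ℝ × ℝ)} {f g : ℝ × ℝ → ℝ} {p z : ℝ × ℝ} {r : ℝ}
    (hf : IsOmegaTropSeries Ω f) (hg : IsOmegaTropSeries Ω g) (hp : p ∈ interior Ω)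
    (hfg : ∀ z ∈ Ω, |f z - g z| ≤ r) (hz : z ∈ Ω) :
    |waveOp Ω {p} f z - waveOp Ω {p} g z| ≤ r := by
  have hr : 0 ≤ r := (abs_nonneg _).trans (hfg p (interior_subset hp))
  refine abs_sInf_sub_sInf_le hr ?_ ?_
  · rintro _ ⟨k, hk, rfl⟩
    obtain ⟨k', hk', hle⟩ := exists_mem_waveSet_le_add hg hp hr
      (fun z hz ↦ by linarith [(abs_sub_le_iff.1 (hfg z hz)).2]) hk
    exact ⟨k' z, ⟨k', hk', rfl⟩, hle z hz⟩
  · rintro _ ⟨k, hk, rfl⟩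
    obtain ⟨k', hk', hle⟩ := exists_mem_waveSet_le_add hf hp hr
      (fun z hz ↦ by linarith [(abs_sub_le_iff.1 (hfg z hz)).1]) hk
    exact ⟨k' z, ⟨k', hk', rfl⟩, hle z hz⟩

lemma abs_canonCoef_sub_canonCoef_le {Ω : Set (ℝ × ℝ)} {f g : ℝ × ℝ → ℝ} {r : ℝ} (hr : 0 ≤ r)
    (hfg : ∀ z ∈ Ω, |f z - g z| ≤ r) (ij : ℤ × ℤ) :
    |canonCoef Ω f ij - canonCoef Ω g ij| ≤ r := by
  refine abs_sSup_sub_sSup_le hr ?_ ?_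
  · rintro _ ⟨z, hz, rfl⟩
    exact ⟨_, ⟨z, hz, rfl⟩, by linarith [(abs_sub_le_iff.1 (hfg z hz)).1]⟩
  · rintro _ ⟨z, hz, rfl⟩
    exact ⟨_, ⟨z, hz, rfl⟩, by linarith [(abs_sub_le_iff.1 (hfg z hz)).2]⟩

theorem stmt_13_general (Ω : Set (ℝ × ℝ))
    (B : Set (ℤ × ℤ)) (a b : ℤ × ℤ → ℝ)
    (f g : ℝ × ℝ → ℝ) (hf : IsOmegaTropSeries Ω f) (hg : IsOmegaTropSeries Ω g)
    (hfB : ∀ z ∈ Ω,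
      IsGLB {v : ℝ | ∃ ij ∈ B, v = (ij.1 : ℝ) * z.1 + (ij.2 : ℝ) * z.2 + a ij} (f z))
    (hgB : ∀ z ∈ Ω,
      IsGLB {v : ℝ | ∃ ij ∈ B, v = (ij.1 : ℝ) * z.1 + (ij.2 : ℝ) * z.2 + b ij} (g z))
    (p : ℝ × ℝ) (hp : p ∈ interior Ω)
    (r : ℝ) (hr : ∀ ij ∈ B, |a ij - b ij| ≤ r) :
    ∀ ij ∈ B, |canonCoef Ω (waveOp Ω {p} f) ij - canonCoef Ω (waveOp Ω {p} g) ij| ≤ r := by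
  intro ij hij
  have hfg : ∀ z ∈ Ω, |f z - g z| ≤ r := fun z hz ↦
    abs_sub_le_of_isGLB_coeffValues (hfB z hz) (hgB z hz) hr
  exact abs_canonCoef_sub_canonCoef_le ((abs_nonneg _).trans (hr ij hij))
    (fun z hz ↦ abs_waveOp_sub_waveOp_le hf hg hp hfg hz) ij

/-- 1-Lipschitz property of the wave operator for the coefficient sup-metric: if the
canonical coefficients of two `Ω`-tropical series `f, g` (over the same index set `B`)
differ by at most `r`, then so do the canonical coefficients of `G_p f` and `G_p g`. -/
theorem stmt_13 (Ω : Set (ℝ × ℝ)) (hconv : Convex ℝ Ω) (hcl : IsClosed Ω)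
    (hint : (interior Ω).Nonempty)
    (hadm : ∃ ij : ℤ × ℤ, ij ≠ (0, 0) ∧
      BddBelow ((fun p : ℝ × ℝ => (ij.1 : ℝ) * p.1 + (ij.2 : ℝ) * p.2) '' Ω))
    (B : Set (ℤ × ℤ)) (a b : ℤ × ℤ → ℝ)
    (f g : ℝ × ℝ → ℝ) (hf : IsOmegaTropSeries Ω f) (hg : IsOmegaTropSeries Ω g)
    (hfB : ∀ z ∈ Ω,
      IsGLB {v : ℝ | ∃ ij ∈ B, v = (ij.1 : ℝ) * z.1 + (ij.2 : ℝ) * z.2 + a ij} (f z))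
    (hgB : ∀ z ∈ Ω,
      IsGLB {v : ℝ | ∃ ij ∈ B, v = (ij.1 : ℝ) * z.1 + (ij.2 : ℝ) * z.2 + b ij} (g z))
    (hacan : ∀ ij ∈ B, a ij = canonCoef Ω f ij)
    (hbcan : ∀ ij ∈ B, b ij = canonCoef Ω g ij)
    (p : ℝ × ℝ) (hp : p ∈ interior Ω)
    (r : ℝ) (hr : ∀ ij ∈ B, |a ij - b ij| ≤ r) :
    ∀ ij ∈ B, |canonCoef Ω (waveOp Ω {p} f) ij - canonCoef Ω (waveOp Ω {p} g) ij| ≤ r :=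
  stmt_13_general Ω B a b f g hf hg hfB hgB p hp r hr
end

section
/- Stability of tropical curves under coefficient perturbation: let ε > 0, B ⊆ ℤ², and f(x,y) = min_{(i,j)∈B}(ix+jy+a_{ij}), g(x,y) = min_{(i,j)∈B}(ix+jy+a_{ij}+δ_{ij}) be tropical series on an open set Ω° with |δ_{ij}| < ε for all (i,j). Then the corner locus C(f) is contained in the 2ε-neighborhood of the corner locus C(g), i.e. every point of C(f) lies within distance 2ε of C(g). -/
/-!
If `g` were differentiable on all of `closedBall z (2 * ε)`, its supergradients there would be
integral vectors forming a locally constant, hence constant, field `intVec m`, so `g` would be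
affine on the ball. Distinct integral slopes differ by at least `1`, so near `z` a slope of
`f` other than `m` would let `f` fall below `g - ε` somewhere in the ball. Hence `f` is affine
near `z`, contradicting `z ∈ C(f)`.
-/

open Metric Filter Topology
open scoped RealInnerProductSpace

section Supergradient

variable {E : Type*} [NormedAddCommGroup E] [InnerProductSpace ℝ E]

def IsSupergradientOn (U : Set E) (g : E → ℝ) (x v : E) : Prop :=
  ∀ y ∈ U, g y ≤ g x + ⟪v, y - x⟫

variable {U s : Set E} {g : E → ℝ} {x v v' w : E}

lemma IsSupergradientOn.mono (h : IsSupergradientOn U g x v) (hs : s ⊆ U) :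
    IsSupergradientOn s g x v :=
  fun y hy => h y (hs hy)

lemma IsSupergradientOn.fderiv_eq (h : IsSupergradientOn U g x v) (hU : U ∈ 𝓝 x)
    (hg : DifferentiableAt ℝ g x) : fderiv ℝ g x = innerSL ℝ v := by
  have hmin : IsLocalMin (fun y => innerSL ℝ v y - g y) x := by
    filter_upwards [hU] with y hy
    have := h y hy
    simp only [innerSL_apply_apply, inner_sub_right] at this ⊢
    linarith
  exact (sub_eq_zero.1 (hmin.hasFDerivAt_eq_zero
    ((innerSL ℝ v).hasFDerivAt.sub hg.hasFDerivAt))).symm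

lemma IsSupergradientOn.eq (h : IsSupergradientOn U g x v) (h' : IsSupergradientOn U g x v')
    (hU : U ∈ 𝓝 x) (hg : DifferentiableAt ℝ g x) : v = v' :=
  innerSL_inj.1 ((h.fderiv_eq hU hg).symm.trans (h'.fderiv_eq hU hg))

lemma hasFDerivAt_of_eventually_isSupergradientOn (hU : U ∈ 𝓝 x)
    (h : ∀ᶠ y in 𝓝 x, IsSupergradientOn U g y v) : HasFDerivAt g (innerSL ℝ v) x := by
  have heq : g =ᶠ[𝓝 x] fun y => (g x - ⟪v, x⟫) + innerSL ℝ v y := by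
    filter_upwards [h, hU] with y hy hyU
    have h1 := h.self_of_nhds y hyU
    have h2 := hy x (mem_of_mem_nhds hU)
    simp only [innerSL_apply_apply, inner_sub_right] at h1 h2 ⊢
    linarith
  exact ((innerSL ℝ v).hasFDerivAt.const_add _).congr_of_eventuallyEq heq

/-- Compare `φ` and `ψ` at `x - t • (v - u) / ‖v - u‖`. -/
lemma mul_norm_sub_le_of_isSupergradientOn {φ ψ : E → ℝ} {u : E} {t c : ℝ} (ht : 0 ≤ t)
    (hφ : IsSupergradientOn (closedBall x t) φ x v)
    (hψ : ∀ y ∈ closedBall x t, ψ x ≤ ψ y + ⟪u, x - y⟫)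
    (hc : ∀ y ∈ closedBall x t, ψ y ≤ φ y + c) :
    t * ‖v - u‖ ≤ φ x - ψ x + c := by
  set e := v - u
  set y := x - (t / ‖e‖) • e
  have hyx : y - x = -((t / ‖e‖) • e) := by simp [y]
  have hy : y ∈ closedBall x t := by
    rw [mem_closedBall, dist_eq_norm, hyx, norm_neg, norm_smul, Real.norm_eq_abs,
      abs_of_nonneg (by positivity)]
    rcases eq_or_ne ‖e‖ 0 with he | he
    · simpa [he] using ht
    · rw [div_mul_cancel₀ _ he]
  have he : ⟪e, y - x⟫ = -(t * ‖e‖) := by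
    rw [hyx, inner_neg_right, real_inner_smul_right, real_inner_self_eq_norm_sq]
    rcases eq_or_ne ‖e‖ 0 with he | he
    · simp [he]
    · field_simp
  have h1 := hφ y hy
  have h2 := hψ y hy
  have h3 := hc y hy
  have hv : ⟪v, y - x⟫ = ⟪u, y - x⟫ + ⟪e, y - x⟫ := by simp [e, inner_sub_left]
  have hu : ⟪u, x - y⟫ = -⟪u, y - x⟫ := by rw [← inner_neg_right, neg_sub]
  linarith

lemma exists_eventually_norm_le_of_isSupergradientOn (hU : U ∈ 𝓝 w)
    (hg : ContinuousAt g w) :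
    ∃ R, ∀ᶠ x in 𝓝 w, ∀ v, IsSupergradientOn U g x v → ‖v‖ ≤ R := by
  have hnear : ∀ᶠ y in 𝓝 w, y ∈ U ∧ g y ∈ Set.Icc (g w - 1) (g w + 1) :=
    Filter.inter_mem hU (hg.eventually (Icc_mem_nhds (by linarith) (by linarith)))
  obtain ⟨r, hr, hball⟩ := nhds_basis_closedBall.eventually_iff.1 hnear
  refine ⟨4 / r, ?_⟩
  filter_upwards [closedBall_mem_nhds w (half_pos hr)] with x hx v hv
  have hsub : closedBall x (r / 2) ⊆ closedBall w r :=
    closedBall_subset_closedBall' (by rw [mem_closedBall] at hx; linarith)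
  have hbound := mul_norm_sub_le_of_isSupergradientOn (ψ := fun _ => g w - 1) (u := 0) (c := 0)
    (half_pos hr).le (hv.mono fun y hy => (hball (hsub hy)).1) (fun y _ => by simp)
    (fun y hy => by simpa using (hball (hsub hy)).2.1)
  have hgx := (hball (hsub (mem_closedBall_self (half_pos hr).le))).2.2
  rw [sub_zero] at hbound
  rw [le_div_iff₀ hr]
  linarith

lemma eventually_not_isSupergradientOn (hg : ContinuousAt g w)
    (h : ¬ IsSupergradientOn U g w v) : ∀ᶠ x in 𝓝 w, ¬ IsSupergradientOn U g x v := by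
  simp only [IsSupergradientOn, not_forall, not_le, exists_prop] at h ⊢
  obtain ⟨y, hyU, hy⟩ := h
  have hcont : ContinuousAt (fun x => g x + ⟪v, y - x⟫) w :=
    hg.add (continuous_const.inner (continuous_const.sub continuous_id)).continuousAt
  filter_upwards [hcont.eventually_lt continuousAt_const hy] with x hx using ⟨y, hyU, hx⟩

end Supergradient

def intVec (m : ℤ × ℤ) : EuclideanSpace ℝ (Fin 2) := !₂[(m.1 : ℝ), m.2]

lemma inner_intVec (m : ℤ × ℤ) (x : EuclideanSpace ℝ (Fin 2)) :
    ⟪intVec m, x⟫ = m.1 * x 0 + m.2 * x 1 := by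
  simp only [intVec, PiLp.inner_apply, RCLike.inner_apply, Real.ringHom_apply, Fin.sum_univ_two,
    Fin.isValue, Matrix.cons_val_zero, Matrix.cons_val_one, Matrix.cons_val_fin_one]
  ring

lemma intVec_sub (m m' : ℤ × ℤ) : intVec (m - m') = intVec m - intVec m' := by
  ext i
  fin_cases i <;> simp [intVec]

lemma abs_fst_le_norm_intVec (m : ℤ × ℤ) : |(m.1 : ℝ)| ≤ ‖intVec m‖ := by
  simpa [intVec] using PiLp.norm_apply_le (intVec m) 0

lemma abs_snd_le_norm_intVec (m : ℤ × ℤ) : |(m.2 : ℝ)| ≤ ‖intVec m‖ := by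
  simpa [intVec] using PiLp.norm_apply_le (intVec m) 1

lemma eq_of_norm_intVec_sub_lt_one {m m' : ℤ × ℤ} (h : ‖intVec m - intVec m'‖ < 1) :
    m = m' := by
  rw [← intVec_sub] at h
  by_contra hne
  have hk : (m - m').1 ≠ 0 ∨ (m - m').2 ≠ 0 := by
    by_contra! h0
    exact hne (sub_eq_zero.1 (Prod.ext h0.1 h0.2))
  rcases hk with hk | hk
  · have : (1 : ℝ) ≤ |((m - m').1 : ℝ)| := by exact_mod_cast Int.one_le_abs hk
    linarith [abs_fst_le_norm_intVec (m - m')]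
  · have : (1 : ℝ) ≤ |((m - m').2 : ℝ)| := by exact_mod_cast Int.one_le_abs hk
    linarith [abs_snd_le_norm_intVec (m - m')]

lemma intVec_injective : Function.Injective intVec := fun m m' h =>
  eq_of_norm_intVec_sub_lt_one (by simp [h])

lemma finite_setOf_norm_intVec_le (R : ℝ) : {m : ℤ × ℤ | ‖intVec m‖ ≤ R}.Finite := by
  have hIcc : ∀ k : ℤ, |(k : ℝ)| ≤ R → k ∈ Set.Icc (-⌈R⌉) ⌈R⌉ := fun k hk => by
    have : |k| ≤ ⌈R⌉ := by exact_mod_cast hk.trans (Int.le_ceil R)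
    exact abs_le.1 this
  refine ((Set.finite_Icc (-⌈R⌉) ⌈R⌉).prod (Set.finite_Icc (-⌈R⌉) ⌈R⌉)).subset fun m hm => ?_
  exact ⟨hIcc _ ((abs_fst_le_norm_intVec m).trans hm),
    hIcc _ ((abs_snd_le_norm_intVec m).trans hm)⟩

section IntegralSupergradient

variable {U V : Set (EuclideanSpace ℝ (Fin 2))} {g : EuclideanSpace ℝ (Fin 2) → ℝ}
  {w : EuclideanSpace ℝ (Fin 2)}

/-- Near a point of continuity the integral supergradients are bounded, hence finitely many
candidates; each one that fails at `w` keeps failing nearby. -/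
lemma eventually_isSupergradientOn_intVec_imp (hU : U ∈ 𝓝 w) (hg : ContinuousAt g w) :
    ∀ᶠ x in 𝓝 w, ∀ m, IsSupergradientOn U g x (intVec m) →
      IsSupergradientOn U g w (intVec m) := by
  obtain ⟨R, hR⟩ := exists_eventually_norm_le_of_isSupergradientOn hU hg
  have hfin : ∀ᶠ x in 𝓝 w, ∀ m ∈ {m | ‖intVec m‖ ≤ R}, IsSupergradientOn U g x (intVec m) →
      IsSupergradientOn U g w (intVec m) := by
    refine (finite_setOf_norm_intVec_le R).eventually_all.2 fun m _ => ?_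
    by_cases hm : IsSupergradientOn U g w (intVec m)
    · exact Eventually.of_forall fun _ _ => hm
    · filter_upwards [eventually_not_isSupergradientOn hg hm] with x hx hx' using (hx hx').elim
  filter_upwards [hR, hfin] with x hxR hx m hm using hx m (hxR _ hm) hm

lemma exists_intVec_isSupergradientOn_of_isPreconnected (hU : IsOpen U)
    (hint : ∀ x ∈ U, ∃ m, IsSupergradientOn U g x (intVec m)) (hVU : V ⊆ U)
    (hV : IsPreconnected V) (hdiff : ∀ x ∈ V, DifferentiableAt ℝ g x) :
    ∃ m, ∀ x ∈ V, IsSupergradientOn U g x (intVec m) := by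
  choose! σ hσ using hint
  have hσ_cont : ContinuousOn σ V := fun w hw => ContinuousAt.continuousWithinAt <| by
    have hwU := hU.mem_nhds (hVU hw)
    rw [ContinuousAt, nhds_discrete (ℤ × ℤ), tendsto_pure]
    filter_upwards [eventually_isSupergradientOn_intVec_imp hwU (hdiff w hw).continuousAt,
      hwU] with x hx hxU
    exact intVec_injective ((hx _ (hσ x hxU)).eq (hσ w (hVU hw)) hwU (hdiff w hw))
  rcases V.eq_empty_or_nonempty with rfl | ⟨w, hw⟩
  · exact ⟨0, by simp⟩
  · exact ⟨σ w, fun x hx => hV.constant hσ_cont hw hx ▸ hσ x (hVU hx)⟩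

/-- A second integral slope `m' ≠ m` of `f` at `x` would make `f` drop below `g - ε` at
distance `t` from `x` in the direction of `intVec m - intVec m'`. -/
lemma eventually_isSupergradientOn_of_abs_sub_lt {f : EuclideanSpace ℝ (Fin 2) → ℝ}
    {z : EuclideanSpace ℝ (Fin 2)} {ε : ℝ} {m : ℤ × ℤ} (hz : z ∈ U)
    (hball : closedBall z (2 * ε) ⊆ U) (hf : ∀ x ∈ U, ∃ m', IsSupergradientOn U f x (intVec m'))
    (hg : ∀ y ∈ closedBall z (2 * ε), IsSupergradientOn U g y (intVec m))
    (hfg : ∀ x ∈ U, |f x - g x| < ε) :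
    ∀ᶠ x in 𝓝 z, IsSupergradientOn U f x (intVec m) := by
  have key : ∀ x t, 0 ≤ t → closedBall x t ⊆ closedBall z (2 * ε) → f x - g x + ε < t →
      IsSupergradientOn U f x (intVec m) := by
    intro x t ht hsub hlt
    have hx := mem_closedBall_self (x := x) ht
    obtain ⟨m', hm'⟩ := hf x (hball (hsub hx))
    suffices m' = m by rwa [← this]
    have hgap := mul_norm_sub_le_of_isSupergradientOn ht (hm'.mono (hsub.trans hball))
      (fun y hy => hg y (hsub hy) x (hball (hsub hx)))
      (fun y hy => by linarith [(abs_lt.1 (hfg y (hball (hsub hy)))).1])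
    exact eq_of_norm_intVec_sub_lt_one (by by_contra! h1; nlinarith)
  have hfgz := abs_lt.1 (hfg z hz)
  have hfz := key z (2 * ε) (by linarith) subset_rfl (by linarith)
  filter_upwards [ball_mem_nhds z (by linarith : 0 < g z - f z + ε)] with x hx
  rw [mem_ball] at hx
  have hxK : x ∈ closedBall z (2 * ε) := mem_closedBall.2 (by linarith)
  have h1 := hfz x (hball hxK)
  have h2 := hg x hxK z hz
  have hu : ⟪intVec m, z - x⟫ = -⟪intVec m, x - z⟫ := by rw [← inner_neg_right, neg_sub]
  exact key x (2 * ε - dist x z) (by linarith) (closedBall_subset_closedBall' (by linarith))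
    (by linarith)

end IntegralSupergradient

lemma exists_intVec_isSupergradientOn_of_isLeast {U : Set (EuclideanSpace ℝ (Fin 2))}
    {B : Set (ℤ × ℤ)} {c : ℤ × ℤ → ℝ} {f : EuclideanSpace ℝ (Fin 2) → ℝ}
    (hf : ∀ z ∈ U, IsLeast
      {v : ℝ | ∃ ij ∈ B, v = (ij.1 : ℝ) * z 0 + (ij.2 : ℝ) * z 1 + c ij} (f z)) :
    ∀ x ∈ U, ∃ m, IsSupergradientOn U f x (intVec m) := by
  intro x hx
  obtain ⟨⟨m, hm, hfx⟩, -⟩ := hf x hx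
  refine ⟨m, fun y hy => ?_⟩
  have hfy := (hf y hy).2 ⟨m, hm, rfl⟩
  rw [inner_sub_right, inner_intVec, inner_intVec]
  linarith

lemma abs_sub_lt_of_isLeast_add {ι : Type*} {B : Set ι} {p δ : ι → ℝ} {s t ε : ℝ}
    (hδ : ∀ i ∈ B, |δ i| < ε) (hs : IsLeast {v | ∃ i ∈ B, v = p i} s)
    (ht : IsLeast {v | ∃ i ∈ B, v = p i + δ i} t) : |s - t| < ε := by
  obtain ⟨⟨i, hi, rfl⟩, hs⟩ := hs
  obtain ⟨⟨j, hj, rfl⟩, ht⟩ := ht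
  have h1 := hs ⟨j, hj, rfl⟩
  have h2 := ht ⟨i, hi, rfl⟩
  have hδi := abs_lt.1 (hδ i hi)
  have hδj := abs_lt.1 (hδ j hj)
  rw [abs_lt]
  constructor <;> linarith

theorem stmt_14_general (U : Set (EuclideanSpace ℝ (Fin 2))) (hU : IsOpen U)
    (ε : ℝ) (B : Set (ℤ × ℤ)) (a δ : ℤ × ℤ → ℝ)
    (hδ : ∀ ij ∈ B, |δ ij| < ε)
    (f g : EuclideanSpace ℝ (Fin 2) → ℝ)
    (hf : ∀ z ∈ U, IsLeast
      {v : ℝ | ∃ ij ∈ B, v = (ij.1 : ℝ) * z 0 + (ij.2 : ℝ) * z 1 + a ij} (f z))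
    (hg : ∀ z ∈ U, IsLeast
      {v : ℝ | ∃ ij ∈ B, v = (ij.1 : ℝ) * z 0 + (ij.2 : ℝ) * z 1 + a ij + δ ij} (g z)) :
    ∀ z ∈ U, ¬ DifferentiableAt ℝ f z → Metric.closedBall z (2 * ε) ⊆ U →
      ∃ w, ¬ DifferentiableAt ℝ g w ∧ dist z w ≤ 2 * ε := by
  intro z hz hnd hball
  by_contra! hfar
  have hdiff : ∀ w ∈ closedBall z (2 * ε), DifferentiableAt ℝ g w := fun w hw => by
    by_contra hw'
    linarith [hfar w hw', mem_closedBall'.1 hw]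
  have hg' : ∀ z ∈ U, IsLeast
      {v : ℝ | ∃ ij ∈ B, v = (ij.1 : ℝ) * z 0 + (ij.2 : ℝ) * z 1 + (a + δ) ij} (g z) := by
    simpa only [Pi.add_apply, add_assoc] using hg
  obtain ⟨m, hm⟩ := exists_intVec_isSupergradientOn_of_isPreconnected hU
    (exists_intVec_isSupergradientOn_of_isLeast hg') hball
    (convex_closedBall z (2 * ε)).isPreconnected hdiff
  have hfg : ∀ x ∈ U, |f x - g x| < ε := fun x hx =>
    abs_sub_lt_of_isLeast_add (p := fun ij => (ij.1 : ℝ) * x 0 + (ij.2 : ℝ) * x 1 + a ij) hδ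
      (hf x hx) (hg x hx)
  exact hnd (hasFDerivAt_of_eventually_isSupergradientOn (hU.mem_nhds hz)
    (eventually_isSupergradientOn_of_abs_sub_lt hz hball
      (exists_intVec_isSupergradientOn_of_isLeast hf) hm hfg)).differentiableAt

/-- Stability of tropical curves under coefficient perturbation: if the coefficients
of two tropical series `f, g` over the same index set `B` differ by less than `ε`,
then every corner point of `C(f)` whose closed `2ε`-ball lies in the open domain `U`
is within distance `2ε` of a corner point of `C(g)`. -/
theorem stmt_14 (U : Set (EuclideanSpace ℝ (Fin 2))) (hU : IsOpen U)
    (ε : ℝ) (hε : 0 < ε) (B : Set (ℤ × ℤ)) (a δ : ℤ × ℤ → ℝ)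
    (hδ : ∀ ij ∈ B, |δ ij| < ε)
    (f g : EuclideanSpace ℝ (Fin 2) → ℝ)
    (hf : ∀ z ∈ U, IsLeast
      {v : ℝ | ∃ ij ∈ B, v = (ij.1 : ℝ) * z 0 + (ij.2 : ℝ) * z 1 + a ij} (f z))
    (hg : ∀ z ∈ U, IsLeast
      {v : ℝ | ∃ ij ∈ B, v = (ij.1 : ℝ) * z 0 + (ij.2 : ℝ) * z 1 + a ij + δ ij} (g z)) :
    ∀ z ∈ U, ¬ DifferentiableAt ℝ f z → Metric.closedBall z (2 * ε) ⊆ U →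
      ∃ w, ¬ DifferentiableAt ℝ g w ∧ dist z w ≤ 2 * ε :=
  stmt_14_general U hU ε B a δ hδ f g hf hg
end
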